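/- arXiv:2203.11739 — 6 statements merged into one kernel-verified Lean document; each statement's English description precedes it below -/
import Mathlib

section
/- Let (X,S) be a minimal dynamical system on a compact metric space and let m ∈ ℕ. Then e^{2πi/m} is a topological eigenvalue of (X,S) if and only if (X,S^m) has exactly m minimal components, i.e., s(m) = m. -/
/-- `(X, S)` is minimal: the only closed invariant subsets are `∅` and `X`. -/
def IsMinimalSystem {X : Type*} [TopologicalSpace X] (S : X → X) : Prop :=
  ∀ Y : Set X, IsClosed Y → S '' Y = Y → Y = ∅ ∨ Y = Set.univ

/-- `Y` is a minimal component of the system `(X, T)`: a nonempty closed invariant set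
containing no proper nonempty closed invariant subset. -/
def IsMinimalComponent {X : Type*} [TopologicalSpace X] (T : X → X) (Y : Set X) : Prop :=
  Y.Nonempty ∧ IsClosed Y ∧ T '' Y = Y ∧
    ∀ Z ⊆ Y, Z.Nonempty → IsClosed Z → T '' Z = Z → Z = Y

/-- `z` is a topological eigenvalue of `(X, S)`: there is a continuous, not identically
vanishing `f : X → ℂ` with `f ∘ S = z·f`. -/
def IsTopologicalEigenvalue {X : Type*} [TopologicalSpace X] (S : X → X) (z : ℂ) : Prop :=
  ∃ f : X → ℂ, Continuous f ∧ (∃ x, f x ≠ 0) ∧ ∀ x, f (S x) = z * f x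

section Aux

variable {X : Type*} [TopologicalSpace X] [CompactSpace X] [T2Space X]

lemma iter_closedMap (S : X ≃ₜ X) (k : ℕ) : IsClosedMap ((⇑S)^[k]) :=
  (S.continuous.iterate k).isClosedMap

lemma aux_closed_univ (S : X ≃ₜ X) (hmin : IsMinimalSystem (⇑S))
    {A : Set X} (hA : IsClosed A) (hinv : ⇑S '' A = A) (hne : A.Nonempty) : A = Set.univ := by
  rcases hmin A hA hinv with h | h
  · rw [h] at hne; exact absurd hne (by simp)
  · exact h

lemma aux_invariant_const (S : X ≃ₜ X) (hmin : IsMinimalSystem (⇑S))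
    (g : X → ℂ) (hg : Continuous g) (hSg : ∀ x, g (S x) = g x) (x y : X) : g x = g y := by
  have hA : IsClosed (g ⁻¹' {g y}) := isClosed_singleton.preimage hg
  have himg : ⇑S '' (g ⁻¹' {g y}) = g ⁻¹' {g y} := by
    ext z
    simp only [Set.mem_image, Set.mem_preimage, Set.mem_singleton_iff]
    constructor
    · rintro ⟨a, ha, rfl⟩; rw [hSg a]; exact ha
    · intro hz
      refine ⟨S.symm z, ?_, S.apply_symm_apply z⟩
      have h2 := hSg (S.symm z)
      rw [S.apply_symm_apply] at h2
      rw [← h2]; exact hz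
  have := aux_closed_univ S hmin hA himg ⟨y, rfl⟩
  have hx : x ∈ g ⁻¹' {g y} := this ▸ Set.mem_univ x
  exact hx

lemma aux_orbit_union (S : X ≃ₜ X) (hmin : IsMinimalSystem (⇑S)) {m : ℕ} (hm : 0 < m)
    {Z : Set X} (hZc : IsClosed Z) (hZne : Z.Nonempty) (hZm : (⇑S)^[m] '' Z = Z) :
    (⋃ j ∈ Finset.range m, (⇑S)^[j] '' Z) = Set.univ := by
  apply aux_closed_univ S hmin
  · exact isClosed_biUnion_finset fun j _ => iter_closedMap S j Z hZc
  · ext x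
    simp only [Set.mem_image, Set.mem_iUnion, Finset.mem_range, exists_prop]
    constructor
    · rintro ⟨a, ⟨j, hj, z, hz, rfl⟩, rfl⟩
      by_cases hjm : j + 1 < m
      · exact ⟨j + 1, hjm, z, hz, Function.iterate_succ_apply' (⇑S) j z⟩
      · have hje : j + 1 = m := by omega
        refine ⟨0, hm, S ((⇑S)^[j] z), ?_, rfl⟩
        have h3 : S ((⇑S)^[j] z) = (⇑S)^[m] z := by
          rw [← Function.iterate_succ_apply' (⇑S) j z, Nat.succ_eq_add_one, hje]
        show S ((⇑S)^[j] z) ∈ Z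
        rw [h3, ← hZm]
        exact ⟨z, hz, rfl⟩
    · rintro ⟨j, hj, z, hz, rfl⟩
      rcases Nat.eq_zero_or_pos j with hj0 | hj0
      · subst hj0
        have : z ∈ (⇑S)^[m] '' Z := hZm.symm ▸ hz
        obtain ⟨w, hw, hwz⟩ := this
        refine ⟨(⇑S)^[m - 1] w, ⟨m - 1, by omega, w, hw, rfl⟩, ?_⟩
        have h3 : S ((⇑S)^[m - 1] w) = (⇑S)^[m] w := by
          rw [← Function.iterate_succ_apply' (⇑S) (m - 1) w, Nat.succ_eq_add_one,
            show m - 1 + 1 = m by omega]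
        show S ((⇑S)^[m - 1] w) = (⇑S)^[0] z
        rw [h3, hwz]
        simp
      · refine ⟨(⇑S)^[j - 1] z, ⟨j - 1, by omega, z, hz, rfl⟩, ?_⟩
        show S ((⇑S)^[j - 1] z) = (⇑S)^[j] z
        rw [← Function.iterate_succ_apply' (⇑S) (j - 1) z, Nat.succ_eq_add_one,
          show j - 1 + 1 = j by omega]
  · obtain ⟨z, hz⟩ := hZne
    exact ⟨z, Set.mem_biUnion (Finset.mem_range.mpr hm) (by simpa using hz)⟩

lemma aux_comp_eq {T : X → X} (hT : Function.Injective T) {Y₁ Y₂ : Set X}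
    (h1 : IsMinimalComponent T Y₁) (h2 : IsMinimalComponent T Y₂)
    (hne : (Y₁ ∩ Y₂).Nonempty) : Y₁ = Y₂ := by
  have himg : T '' (Y₁ ∩ Y₂) = Y₁ ∩ Y₂ := by
    rw [Set.image_inter hT, h1.2.2.1, h2.2.2.1]
  have e1 := h1.2.2.2 _ Set.inter_subset_left hne (h1.2.1.inter h2.2.1) himg
  have e2 := h2.2.2.2 _ Set.inter_subset_right hne (h1.2.1.inter h2.2.1) himg
  rw [← e1]; exact e2

lemma aux_comp_image (S : X ≃ₜ X) (m k : ℕ) {Y : Set X}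
    (hY : IsMinimalComponent ((⇑S)^[m]) Y) :
    IsMinimalComponent ((⇑S)^[m]) ((⇑S)^[k] '' Y) := by
  obtain ⟨hne, hc, hinv, hmin'⟩ := hY
  have hcomm : ∀ A : Set X, (⇑S)^[m] '' ((⇑S)^[k] '' A) = (⇑S)^[k] '' ((⇑S)^[m] '' A) := by
    intro A
    rw [← Set.image_comp, ← Function.iterate_add, Nat.add_comm, Function.iterate_add,
      Set.image_comp]
  have hLI : ∀ (n : ℕ) (y : X), (⇑S.symm)^[n] ((⇑S)^[n] y) = y := fun n =>
    Function.LeftInverse.iterate S.symm_apply_apply n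
  have hRI : ∀ (n : ℕ) (y : X), (⇑S)^[n] ((⇑S.symm)^[n] y) = y := fun n =>
    Function.LeftInverse.iterate S.apply_symm_apply n
  have hLIimg : ∀ A : Set X, (⇑S.symm)^[k] '' ((⇑S)^[k] '' A) = A := fun A =>
    Function.LeftInverse.image_image (Function.LeftInverse.iterate S.symm_apply_apply k) A
  have hRIimg : ∀ A : Set X, (⇑S)^[k] '' ((⇑S.symm)^[k] '' A) = A := fun A =>
    Function.LeftInverse.image_image (Function.LeftInverse.iterate S.apply_symm_apply k) A
  refine ⟨hne.image _, iter_closedMap S k Y hc, by rw [hcomm, hinv], ?_⟩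
  intro Z hZ hZne hZc hZinv
  have hZ'Y : (⇑S.symm)^[k] '' Z ⊆ Y := by
    rw [← hLIimg Y]
    exact Set.image_mono hZ
  have hZ'c : IsClosed ((⇑S.symm)^[k] '' Z) := (S.symm.continuous.iterate k).isClosedMap Z hZc
  have hZ'inv : (⇑S)^[m] '' ((⇑S.symm)^[k] '' Z) = (⇑S.symm)^[k] '' Z := by
    apply Function.Injective.image_injective (S.injective.iterate k)
    rw [hRIimg, ← hcomm, hRIimg, hZinv]
  have heq := hmin' _ hZ'Y (hZne.image _) hZ'c hZ'inv
  rw [← heq, hRIimg]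

end Aux

/-- For a minimal homeomorphism `S` of a compact metric space `X` and
`m ∈ ℕ`, `e^{2πi/m}` is a topological eigenvalue of `(X,S)` if and only if `(X,S^m)`
has exactly `m` minimal components. -/
theorem topologicalEigenvalue_iff_m_minimal_components
    {X : Type*} [MetricSpace X] [CompactSpace X]
    (S : X ≃ₜ X) (hmin : IsMinimalSystem (⇑S))
    (m : ℕ) (hm : 0 < m) :
    IsTopologicalEigenvalue (⇑S) (Complex.exp (2 * Real.pi * Complex.I / m)) ↔
      {Y : Set X | IsMinimalComponent ((⇑S)^[m]) Y}.ncard = m := by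
  haveI : NeZero m := ⟨hm.ne'⟩
  set ζ := Complex.exp (2 * Real.pi * Complex.I / m) with hζdef
  have hprim : IsPrimitiveRoot ζ m := Complex.isPrimitiveRoot_exp m hm.ne'
  have hζm : ζ ^ m = 1 := hprim.pow_eq_one
  have hζ0 : ζ ≠ 0 := hζdef ▸ Complex.exp_ne_zero _
  have hRI : ∀ (n : ℕ) (y : X), (⇑S)^[n] ((⇑S.symm)^[n] y) = y := fun n =>
    Function.LeftInverse.iterate S.apply_symm_apply n
  constructor
  · rintro ⟨f, hf, ⟨x₁, hx₁⟩, hfS⟩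
    have hgc : Continuous (fun x => f x / f x₁) := hf.div_const _
    set g : X → ℂ := fun x => f x / f x₁ with hgdef
    have hgS : ∀ x, g (S x) = ζ * g x := by
      intro x; simp only [hgdef, hfS x, mul_div_assoc]
    have hfm : ∀ x, (f x) ^ m = (f x₁) ^ m := by
      intro x
      apply aux_invariant_const S hmin (fun x => (f x) ^ m) (hf.pow m)
      intro y; simp only [hfS y, mul_pow, hζm, one_mul]
    have hgm : ∀ x, (g x) ^ m = 1 := by
      intro x
      simp only [hgdef, div_pow, hfm x, div_self (pow_ne_zero m hx₁)]
    have hgx₁ : g x₁ = 1 := div_self hx₁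
    have hgiter : ∀ (j : ℕ) (x : X), g ((⇑S)^[j] x) = ζ ^ j * g x := by
      intro j
      induction j with
      | zero => intro x; simp
      | succ n ih =>
        intro x
        rw [Function.iterate_succ_apply', hgS, ih x]
        ring
    set Y : ℕ → Set X := fun k => {x | g x = ζ ^ k} with hYdef
    have hYc : ∀ k, IsClosed (Y k) := fun k => isClosed_eq hgc continuous_const
    have hYmem : ∀ j : ℕ, (⇑S)^[j] x₁ ∈ Y j := by
      intro j
      show g ((⇑S)^[j] x₁) = ζ ^ j
      rw [hgiter j x₁, hgx₁, mul_one]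
    have hYinv : ∀ k, (⇑S)^[m] '' Y k = Y k := by
      intro k
      ext y
      constructor
      · rintro ⟨x, hx, rfl⟩
        show g ((⇑S)^[m] x) = ζ ^ k
        rw [hgiter m x, hζm, one_mul]
        exact hx
      · intro hy
        refine ⟨(⇑S.symm)^[m] y, ?_, hRI m y⟩
        show g ((⇑S.symm)^[m] y) = ζ ^ k
        have h2 := hgiter m ((⇑S.symm)^[m] y)
        rw [hRI m y, hζm, one_mul] at h2
        rw [← h2]
        exact hy
    have hYcomp : ∀ k : ℕ, IsMinimalComponent ((⇑S)^[m]) (Y k) := by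
      intro k
      refine ⟨⟨(⇑S)^[k] x₁, hYmem k⟩, hYc k, hYinv k, ?_⟩
      intro Z hZY hZne hZc hZinv
      have hWuniv := aux_orbit_union S hmin hm hZc hZne hZinv
      apply Set.Subset.antisymm hZY
      intro y hy
      have hyW : y ∈ ⋃ j ∈ Finset.range m, (⇑S)^[j] '' Z := hWuniv ▸ Set.mem_univ y
      simp only [Set.mem_iUnion, Set.mem_image, Finset.mem_range, exists_prop] at hyW
      obtain ⟨j, hj, z, hz, rfl⟩ := hyW
      have hz' : g z = ζ ^ k := hZY hz
      have h1 : ζ ^ j * ζ ^ k = 1 * ζ ^ k := by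
        rw [one_mul]
        have h3 := hgiter j z
        rw [hz'] at h3
        rw [← h3]
        exact hy
      have h2 : ζ ^ j = 1 := mul_right_cancel₀ (pow_ne_zero k hζ0) h1
      have hj0 : j = 0 := Nat.eq_zero_of_dvd_of_lt ((hprim.pow_eq_one_iff_dvd j).mp h2) hj
      subst hj0
      simpa using hz
    have hInjOn : Set.InjOn (fun k => Y k) ↑(Finset.range m) := by
      intro j hj k hk hjk
      simp only [Finset.coe_range, Set.mem_Iio] at hj hk
      have hjk' : Y j = Y k := hjk
      have hmem : (⇑S)^[j] x₁ ∈ Y k := hjk' ▸ hYmem j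
      have : ζ ^ j = ζ ^ k := by
        have h2 : g ((⇑S)^[j] x₁) = ζ ^ k := hmem
        rw [hgiter j x₁, hgx₁, mul_one] at h2
        exact h2
      exact hprim.pow_inj hj hk this
    have hset : {W : Set X | IsMinimalComponent ((⇑S)^[m]) W} = (fun k => Y k) '' ↑(Finset.range m) := by
      ext W
      simp only [Set.mem_setOf_eq, Set.mem_image, Finset.coe_range, Set.mem_Iio]
      constructor
      · intro hW
        obtain ⟨x, hx⟩ := hW.1
        obtain ⟨k, hk, hgk⟩ := hprim.eq_pow_of_pow_eq_one (hgm x)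
        have hx' : x ∈ Y k := hgk.symm
        have heq := aux_comp_eq (S.injective.iterate m) hW (hYcomp k) ⟨x, hx, hx'⟩
        exact ⟨k, hk, heq.symm⟩
      · rintro ⟨k, hk, rfl⟩
        exact hYcomp k
    rw [hset, Set.ncard_image_of_injOn hInjOn, Set.ncard_coe_finset, Finset.card_range]
  · intro hcard
    have hCfin : {W : Set X | IsMinimalComponent ((⇑S)^[m]) W}.Finite :=
      Set.finite_of_ncard_ne_zero (by rw [hcard]; exact hm.ne')
    have hCne : {W : Set X | IsMinimalComponent ((⇑S)^[m]) W}.Nonempty :=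
      Set.nonempty_of_ncard_ne_zero (by rw [hcard]; exact hm.ne')
    obtain ⟨Y₀, hY₀⟩ := hCne
    have hY₀' : IsMinimalComponent ((⇑S)^[m]) Y₀ := hY₀
    have hcomp : ∀ k : ℕ, IsMinimalComponent ((⇑S)^[m]) ((⇑S)^[k] '' Y₀) := fun k =>
      aux_comp_image S m k hY₀'
    have hsub : ∀ d : ℕ, 0 < d → (⇑S)^[d] '' Y₀ = Y₀ →
        {W : Set X | IsMinimalComponent ((⇑S)^[m]) W} ⊆
          (fun k => (⇑S)^[k] '' Y₀) '' ↑(Finset.range d) := by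
      intro d hd hdY W hW
      obtain ⟨x, hx⟩ := hW.1
      have hU := aux_orbit_union S hmin hd hY₀'.2.1 hY₀'.1 hdY
      have hxU : x ∈ ⋃ j ∈ Finset.range d, (⇑S)^[j] '' Y₀ := hU ▸ Set.mem_univ x
      simp only [Set.mem_iUnion, Finset.mem_range, exists_prop] at hxU
      obtain ⟨j, hj, hxj⟩ := hxU
      have heq := aux_comp_eq (S.injective.iterate m) hW (hcomp j) ⟨x, hx, hxj⟩
      exact ⟨j, by simpa using hj, heq.symm⟩
    have hmY : (⇑S)^[m] '' Y₀ = Y₀ := hY₀'.2.2.1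
    have key : ∀ j k : ℕ, j < k → k < m → (⇑S)^[j] '' Y₀ = (⇑S)^[k] '' Y₀ → False := by
      intro j k h hk hjk'
      have hd0 : 0 < k - j := by omega
      have hdY : (⇑S)^[k - j] '' Y₀ = Y₀ := by
        apply Function.Injective.image_injective (S.injective.iterate j)
        have hcomp2 : (⇑S)^[j] '' ((⇑S)^[k - j] '' Y₀) = (⇑S)^[k] '' Y₀ := by
          rw [← Set.image_comp, ← Function.iterate_add, show j + (k - j) = k by omega]
        rw [hcomp2, ← hjk']
      have hle := Set.ncard_le_ncard (hsub (k - j) hd0 hdY)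
        (((Finset.range (k - j) : Finset ℕ) : Set ℕ).toFinite.image _)
      have hle2 := Set.ncard_image_le (s := (↑(Finset.range (k - j)) : Set ℕ))
        (f := fun k => (⇑S)^[k] '' Y₀) (((Finset.range (k - j) : Finset ℕ) : Set ℕ).toFinite)
      rw [Set.ncard_coe_finset, Finset.card_range] at hle2
      rw [hcard] at hle
      omega
    have hInjOn : Set.InjOn (fun k => (⇑S)^[k] '' Y₀) ↑(Finset.range m) := by
      intro j hj k hk hjk
      simp only [Finset.coe_range, Set.mem_Iio] at hj hk
      have hjk' : (⇑S)^[j] '' Y₀ = (⇑S)^[k] '' Y₀ := hjk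
      rcases lt_trichotomy j k with h | h | h
      · exact absurd hjk' (fun hh => key j k h hk hh)
      · exact h
      · exact absurd hjk'.symm (fun hh => key k j h hj hh)
    have hU := aux_orbit_union S hmin hm hY₀'.2.1 hY₀'.1 hmY
    have hcover : ∀ x : X, ∃ k < m, x ∈ (⇑S)^[k] '' Y₀ := by
      intro x
      have hxU : x ∈ ⋃ j ∈ Finset.range m, (⇑S)^[j] '' Y₀ := hU ▸ Set.mem_univ x
      simp only [Set.mem_iUnion, Finset.mem_range, exists_prop] at hxU
      exact hxU
    have hdisj : ∀ j k : ℕ, j < m → k < m → j ≠ k →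
        ∀ x, x ∈ (⇑S)^[j] '' Y₀ → x ∉ (⇑S)^[k] '' Y₀ := by
      intro j k hj hk hne x hxj hxk
      have := aux_comp_eq (S.injective.iterate m) (hcomp j) (hcomp k) ⟨x, hxj, hxk⟩
      exact hne (hInjOn (by simpa using hj) (by simpa using hk) this)
    have hclopen : ∀ k, k < m → IsClopen ((⇑S)^[k] '' Y₀) := by
      intro k hk
      refine ⟨iter_closedMap S k Y₀ hY₀'.2.1, ?_⟩
      rw [← isClosed_compl_iff]
      have hcompl : ((⇑S)^[k] '' Y₀)ᶜ = ⋃ j ∈ (Finset.range m).erase k, (⇑S)^[j] '' Y₀ := by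
        ext x
        simp only [Set.mem_compl_iff, Set.mem_iUnion, Finset.mem_erase, Finset.mem_range,
          exists_prop]
        constructor
        · intro hx
          obtain ⟨j, hj, hxj⟩ := hcover x
          have hne : j ≠ k := fun h => hx (h ▸ hxj)
          exact ⟨j, ⟨hne, hj⟩, hxj⟩
        · rintro ⟨j, ⟨hne, hj⟩, hxj⟩
          exact hdisj j k hj hk hne x hxj
      rw [hcompl]
      exact isClosed_biUnion_finset fun j _ => iter_closedMap S j Y₀ hY₀'.2.1
    set f : X → ℂ := fun x =>
      ∑ k ∈ Finset.range m, Set.indicator ((⇑S)^[k] '' Y₀) (fun _ => ζ ^ k) x with hfdef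
    have hfc : Continuous f := by
      apply continuous_finset_sum
      intro k hk
      refine continuous_indicator ?_ continuous_const.continuousOn
      rw [(hclopen k (Finset.mem_range.mp hk)).frontier_eq]
      simp
    have hval : ∀ k, k < m → ∀ x, x ∈ (⇑S)^[k] '' Y₀ → f x = ζ ^ k := by
      intro k hk x hx
      rw [hfdef]
      simp only
      rw [Finset.sum_eq_single k]
      · exact Set.indicator_of_mem hx _
      · intro j hj hjk
        exact Set.indicator_of_notMem
          (hdisj k j hk (Finset.mem_range.mp hj) (Ne.symm hjk) x hx) _
      · intro h
        exact absurd (Finset.mem_range.mpr hk) h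
    obtain ⟨y₀, hy₀⟩ := hY₀'.1
    refine ⟨f, hfc, ⟨y₀, ?_⟩, ?_⟩
    · have h0 : f y₀ = ζ ^ 0 := hval 0 hm y₀ (by simpa using hy₀)
      rw [h0, pow_zero]
      exact one_ne_zero
    · intro x
      obtain ⟨k, hk, y, hy, rfl⟩ := hcover x
      have hfx : f ((⇑S)^[k] y) = ζ ^ k := hval k hk _ ⟨y, hy, rfl⟩
      have hSx : S ((⇑S)^[k] y) = (⇑S)^[k + 1] y := (Function.iterate_succ_apply' (⇑S) k y).symm
      by_cases hkm : k + 1 < m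
      · have h2 : f ((⇑S)^[k + 1] y) = ζ ^ (k + 1) := hval (k + 1) hkm _ ⟨y, hy, rfl⟩
        rw [hSx, h2, hfx]
        ring
      · have hke : k + 1 = m := by omega
        have hxin : (⇑S)^[k + 1] y ∈ Y₀ := by
          rw [hke, ← hmY]
          exact ⟨y, hy, rfl⟩
        have h2 : f ((⇑S)^[k + 1] y) = ζ ^ 0 := hval 0 hm _ (by simpa using hxin)
        rw [hSx, h2, hfx, pow_zero]
        have hone : ζ * ζ ^ k = 1 := by
          rw [← pow_succ', hke, hζm]
        rw [hone]
end

section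
/- Let (X,S) be a Boshernitzan subshift over a finite alphabet 𝒜 and let (X',S') be a p-periodic subshift over a finite alphabet 𝒜'. Let T = S × S' act on X × X'. Then X × X' is the disjoint union of finitely many T-minimal components, and the number of T-minimal components of (X × X', T) equals the number of S^p-minimal components of (X, S^p). -/
open MeasureTheory Filter
open scoped ENNReal

/-- The left shift on bi-infinite sequences: `(S x) n = x (n+1)`. -/
def shiftMap {A : Type*} (x : ℤ → A) : ℤ → A := fun n => x (n + 1)

/-- A subshift: a nonempty, closed, shift-invariant subset of `𝒜^ℤ`. -/
def IsSubshift {A : Type*} [TopologicalSpace A] (X : Set (ℤ → A)) : Prop :=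
  X.Nonempty ∧ IsClosed X ∧ shiftMap '' X = X

/-- Minimality of the map `T` on the invariant set `P`:
no proper nonempty closed `T`-invariant subset. -/
def MinimalOn {α : Type*} [TopologicalSpace α] (T : α → α) (P : Set α) : Prop :=
  ∀ Y ⊆ P, IsClosed Y → T '' Y = Y → Y = ∅ ∨ Y = P

/-- `Y` is a minimal component of the system `(P, T)`. -/
def MinComponent {α : Type*} [TopologicalSpace α] (T : α → α) (P : Set α) (Y : Set α) : Prop :=
  Y ⊆ P ∧ Y.Nonempty ∧ IsClosed Y ∧ T '' Y = Y ∧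
    ∀ Z ⊆ Y, Z.Nonempty → IsClosed Z → T '' Z = Z → Z = Y

/-- The number of minimal components of `(P, T)`. -/
noncomputable def numMinComponents {α : Type*} [TopologicalSpace α] (T : α → α) (P : Set α) : ℕ :=
  {Y : Set α | MinComponent T P Y}.ncard

/-- The cylinder set of a word `u` of length `n` (based at the origin). -/
def cylSet {A : Type*} (n : ℕ) (u : Fin n → A) : Set (ℤ → A) :=
  {x | ∀ i : Fin n, x ((i : ℕ) : ℤ) = u i}

/-- The words of length `n` occurring in elements of `X`. -/
def wordsIn {A : Type*} (X : Set (ℤ → A)) (n : ℕ) : Set (Fin n → A) :=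
  {u | ∃ x ∈ X, ∃ m : ℤ, ∀ i : Fin n, x (m + (i : ℕ)) = u i}

/-- `μ̲(n)`: the minimal measure of a cylinder over a legal word of length `n`. -/
noncomputable def muLow {A : Type*} [MeasurableSpace A] (μ : Measure (ℤ → A))
    (X : Set (ℤ → A)) (n : ℕ) : ℝ≥0∞ :=
  sInf ((fun u => μ (cylSet n u)) '' wordsIn X n)

/-- Boshernitzan subshift: a minimal subshift carrying a shift-invariant Borel
probability measure `μ` with `limsup n·μ̲(n) > 0`. -/
def IsBoshernitzan {A : Type*} [TopologicalSpace A] [MeasurableSpace A]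
    (X : Set (ℤ → A)) : Prop :=
  IsSubshift X ∧ MinimalOn shiftMap X ∧
    ∃ μ : Measure (ℤ → A), IsProbabilityMeasure μ ∧ μ X = 1 ∧
      Measure.map shiftMap μ = μ ∧
      0 < Filter.limsup (fun n : ℕ => (n : ℝ≥0∞) * muLow μ X n) Filter.atTop

/-- The product map `T = S × S'` on pairs of sequences. -/
def prodShift {A A' : Type*} (z : (ℤ → A) × (ℤ → A')) : (ℤ → A) × (ℤ → A') :=
  (shiftMap z.1, shiftMap z.2)


section Aux

variable {α : Type*} [TopologicalSpace α]

lemma auxClosedImage [CompactSpace α] [T2Space α] {T : α → α} (hT : Continuous T)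
    {K : Set α} (hK : IsClosed K) : IsClosed (T '' K) :=
  (hK.isCompact.image hT).isClosed

lemma auxIterateImage {T : α → α} {B : Set α} (h : T '' B = B) (n : ℕ) :
    T^[n] '' B = B := by
  induction n with
  | zero => simp
  | succ n ih =>
    rw [Function.iterate_succ', Set.image_comp, ih, h]

lemma auxModImage {T : α → α} {B : Set α} {p : ℕ} (h : T^[p] '' B = B) (a : ℕ) :
    T^[a] '' B = T^[a % p] '' B := by
  conv_lhs => rw [← Nat.div_add_mod a p]
  generalize a / p = q
  induction q with
  | zero => simp
  | succ q ih =>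
    have : p * (q + 1) + a % p = (p * q + a % p) + p := by ring
    rw [this, Function.iterate_add, Set.image_comp, h, ih]

lemma auxShuffle {T : α → α} {B : Set α} {p : ℕ} (hp : 0 < p) (h : T^[p] '' B = B) :
    T '' (⋃ k ∈ Finset.range p, T^[k] '' B) = ⋃ k ∈ Finset.range p, T^[k] '' B := by
  have himg : T '' (⋃ k ∈ Finset.range p, T^[k] '' B)
      = ⋃ k ∈ Finset.range p, T^[k+1] '' B := by
    rw [Set.image_iUnion₂]
    refine Set.iUnion₂_congr fun k _ => ?_
    rw [← Set.image_comp, ← Function.iterate_succ']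
  rw [himg]
  ext x
  simp only [Set.mem_iUnion, Finset.mem_range]
  constructor
  · rintro ⟨k, hk, hx⟩
    by_cases he : k + 1 = p
    · refine ⟨0, hp, ?_⟩
      rw [he, h] at hx
      simpa using hx
    · exact ⟨k + 1, by omega, hx⟩
  · rintro ⟨k, hk, hx⟩
    rcases Nat.eq_zero_or_pos k with rfl | hkpos
    · refine ⟨p - 1, by omega, ?_⟩
      rw [Nat.sub_add_cancel hp, h]
      simpa using hx
    · exact ⟨k - 1, by omega, by rwa [Nat.sub_add_cancel hkpos]⟩

lemma auxExistsMin [CompactSpace α] [T2Space α] {T T' : α → α} (hT : Continuous T)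
    (hT'T : ∀ x, T' (T x) = x) (hTT' : ∀ x, T (T' x) = x)
    {K : Set α} (hKn : K.Nonempty) (hKc : IsClosed K) (hKi : T '' K = K) :
    ∃ M, M ⊆ K ∧ M.Nonempty ∧ IsClosed M ∧ T '' M = M ∧
      ∀ Z ⊆ M, Z.Nonempty → IsClosed Z → T '' Z = Z → Z = M := by
  set S : Set (Set α) := {Y | Y ⊆ K ∧ Y.Nonempty ∧ IsClosed Y ∧ T '' Y = Y} with hS
  have hzorn := zorn_superset_nonempty S ?_ K ⟨Set.Subset.rfl, hKn, hKc, hKi⟩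
  · obtain ⟨m, hmK, hm⟩ := hzorn
    obtain ⟨hmsub, hmne, hmcl, hminv⟩ := hm.prop
    refine ⟨m, hmsub, hmne, hmcl, hminv, fun Z hZm hZn hZc hZi => ?_⟩
    exact Set.Subset.antisymm hZm (hm.le_of_le ⟨hZm.trans hmsub, hZn, hZc, hZi⟩ hZm)
  · intro c hcS hchain hcne
    refine ⟨⋂₀ c, ⟨?_, ?_, ?_, ?_⟩, fun s hs => Set.sInter_subset_of_mem hs⟩
    · obtain ⟨s, hs⟩ := hcne
      exact (Set.sInter_subset_of_mem hs).trans (hcS hs).1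
    · have : Nonempty c := hcne.to_subtype
      have hdir : DirectedOn (· ⊇ ·) c := by
        intro s hs t ht
        by_cases hst : s = t
        · exact ⟨s, hs, le_refl s, hst ▸ le_refl s⟩
        · rcases hchain hs ht hst with h | h
          · exact ⟨s, hs, le_refl s, h⟩
          · exact ⟨t, ht, h, le_refl t⟩
      exact IsCompact.nonempty_sInter_of_directed_nonempty_isCompact_isClosed
        hdir (fun U hU => (hcS hU).2.1)
        (fun U hU => (hcS hU).2.2.1.isCompact) (fun U hU => (hcS hU).2.2.1)
    · exact isClosed_sInter fun U hU => (hcS hU).2.2.1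
    · apply Set.Subset.antisymm
      · intro x ⟨w, hw, hwx⟩
        intro s hs
        rw [← (hcS hs).2.2.2]
        exact ⟨w, hw s hs, hwx⟩
      · intro x hx
        refine ⟨T' x, fun s hs => ?_, hTT' x⟩
        have := hx s hs
        rw [← (hcS hs).2.2.2] at this
        obtain ⟨w, hw, hwx⟩ := this
        have : w = T' x := by rw [← hwx, hT'T]
        rwa [← this]


lemma auxSmallDvd {p a b : ℕ} (ha : a < p) (hb : b < p) (h : (p:ℤ) ∣ (a:ℤ) - b) : a = b := by
  rcases h with ⟨c, hc⟩
  rcases lt_trichotomy c 0 with h1 | h1 | h1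
  · have h2 : (a:ℤ) - b ≤ -(p:ℤ) := by rw [hc]; nlinarith
    omega
  · subst h1; simp at hc; omega
  · have h2 : (p:ℤ) ≤ (a:ℤ) - b := by rw [hc]; nlinarith
    omega

lemma auxMinEq {T : α → α} (hinj : Function.Injective T) {P Y Z : Set α}
    (hY : MinComponent T P Y) (hZ : MinComponent T P Z) (hne : (Y ∩ Z).Nonempty) : Y = Z := by
  have hcl : IsClosed (Y ∩ Z) := hY.2.2.1.inter hZ.2.2.1
  have hinv : T '' (Y ∩ Z) = Y ∩ Z := by
    rw [Set.image_inter hinj, hY.2.2.2.1, hZ.2.2.2.1]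
  have h1 := hY.2.2.2.2 _ Set.inter_subset_left hne hcl hinv
  have h2 := hZ.2.2.2.2 _ Set.inter_subset_right hne hcl hinv
  exact h1.symm.trans h2

lemma auxMinImage [CompactSpace α] [T2Space α] {T g g' : α → α}
    (hg : Continuous g) (hg' : Continuous g')
    (hgg' : ∀ x, g (g' x) = x) (hg'g : ∀ x, g' (g x) = x)
    (hcomm : ∀ x, T (g x) = g (T x)) {P M : Set α}
    (hgP : g '' P ⊆ P) (hM : MinComponent T P M) : MinComponent T P (g '' M) := by
  obtain ⟨hMP, hMne, hMcl, hMinv, hMmin⟩ := hM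
  have hcomm' : ∀ x, T (g' x) = g' (T x) := by
    intro x
    have h0 := hcomm (g' x)
    rw [hgg'] at h0
    rw [h0, hg'g]
  have himg : ∀ (h₁ h₂ : α → α) (s : Set α), (∀ x, h₁ (h₂ x) = h₂ (h₁ x)) →
      h₁ '' (h₂ '' s) = h₂ '' (h₁ '' s) := by
    intro h₁ h₂ s hc
    have hcc : h₁ ∘ h₂ = h₂ ∘ h₁ := funext hc
    rw [← Set.image_comp, hcc, Set.image_comp]
  refine ⟨(Set.image_mono (f := g) hMP).trans hgP, hMne.image g, auxClosedImage hg hMcl, ?_, ?_⟩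
  · rw [himg T g M hcomm, hMinv]
  · intro Z hZ hZn hZc hZi
    have h1 : g' '' Z ⊆ M := by
      rintro _ ⟨z, hz, rfl⟩
      obtain ⟨m, hm, hmz⟩ := hZ hz
      rw [← hmz, hg'g]
      exact hm
    have h2 : T '' (g' '' Z) = g' '' Z := by
      rw [himg T g' Z hcomm', hZi]
    have h3 := hMmin _ h1 (hZn.image g') (auxClosedImage hg' hZc) h2
    have h4 : g '' (g' '' Z) = Z := by
      rw [← Set.image_comp]
      have : g ∘ g' = id := funext hgg'
      rw [this, Set.image_id]
    rw [← h4, h3]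

end Aux

def shiftInv {A : Type*} (x : ℤ → A) : ℤ → A := fun n => x (n - 1)

lemma shiftMap_cont {A : Type*} [TopologicalSpace A] : Continuous (shiftMap (A := A)) :=
  continuous_pi fun n => continuous_apply (n + 1)

lemma shiftInv_cont {A : Type*} [TopologicalSpace A] : Continuous (shiftInv (A := A)) :=
  continuous_pi fun n => continuous_apply (n - 1)

lemma shiftInv_shiftMap {A : Type*} (x : ℤ → A) : shiftInv (shiftMap x) = x := by
  funext n; simp [shiftInv, shiftMap]

lemma shiftMap_shiftInv {A : Type*} (x : ℤ → A) : shiftMap (shiftInv x) = x := by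
  funext n; simp [shiftInv, shiftMap]

def prodInv {A A' : Type*} (z : (ℤ → A) × (ℤ → A')) : (ℤ → A) × (ℤ → A') :=
  (shiftInv z.1, shiftInv z.2)

lemma prodShift_cont {A A' : Type*} [TopologicalSpace A] [TopologicalSpace A'] :
    Continuous (prodShift (A := A) (A' := A')) :=
  (shiftMap_cont.comp continuous_fst).prodMk (shiftMap_cont.comp continuous_snd)

lemma prodInv_cont {A A' : Type*} [TopologicalSpace A] [TopologicalSpace A'] :
    Continuous (prodInv (A := A) (A' := A')) :=
  (shiftInv_cont.comp continuous_fst).prodMk (shiftInv_cont.comp continuous_snd)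

lemma prodInv_prodShift {A A' : Type*} (z : (ℤ → A) × (ℤ → A')) :
    prodInv (prodShift z) = z := by
  simp [prodInv, prodShift, shiftInv_shiftMap]

lemma prodShift_prodInv {A A' : Type*} (z : (ℤ → A) × (ℤ → A')) :
    prodShift (prodInv z) = z := by
  simp [prodInv, prodShift, shiftMap_shiftInv]

lemma prodShift_iter {A A' : Type*} (k : ℕ) (z : (ℤ → A) × (ℤ → A')) :
    prodShift^[k] z = (shiftMap^[k] z.1, shiftMap^[k] z.2) := by
  induction k with
  | zero => simp
  | succ k ih =>
    rw [Function.iterate_succ_apply', ih, Function.iterate_succ_apply',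
      Function.iterate_succ_apply']
    rfl


/-- Let `X` be a Boshernitzan subshift and `X'` the `p`-periodic
subshift consisting of all translates of a sequence `y` of least period `p`. Then
`X × X'` is the disjoint union of finitely many `T`-minimal components, whose number
equals the number of `S^p`-minimal components of `X`. -/
theorem product_with_periodic_minimal_components
    {A A' : Type*} [Fintype A] [TopologicalSpace A] [DiscreteTopology A]
    [MeasurableSpace A] [BorelSpace A]
    [Fintype A'] [TopologicalSpace A'] [DiscreteTopology A']
    (X : Set (ℤ → A)) (hX : IsBoshernitzan X)
    (p : ℕ) (hp : 0 < p) (y : ℤ → A')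
    (hyper : ∀ n : ℤ, y (n + (p : ℤ)) = y n)
    (hleast : ∀ q : ℕ, 0 < q → (∀ n : ℤ, y (n + (q : ℤ)) = y n) → p ≤ q)
    (X' : Set (ℤ → A')) (hX' : X' = {z | ∃ j : ℤ, ∀ n : ℤ, z n = y (n + j)}) :
    {Y : Set ((ℤ → A) × (ℤ → A')) | MinComponent prodShift (X ×ˢ X') Y}.Finite ∧
      ⋃₀ {Y : Set ((ℤ → A) × (ℤ → A')) | MinComponent prodShift (X ×ˢ X') Y} = X ×ˢ X' ∧
      {Y : Set ((ℤ → A) × (ℤ → A')) | MinComponent prodShift (X ×ˢ X') Y}.Pairwise Disjoint ∧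
      numMinComponents prodShift (X ×ˢ X') = numMinComponents (shiftMap^[p]) X := by
    classical
  obtain ⟨⟨hXne, hXcl, hXinv⟩, hXmin, -⟩ := hX
  -- basic maps
  have hScont : Continuous (shiftMap (A := A)) := shiftMap_cont
  have hSinj : Function.Injective (shiftMap (A := A)) :=
    Function.LeftInverse.injective shiftInv_shiftMap
  have hSpinj : Function.Injective (shiftMap (A := A))^[p] := hSinj.iterate p
  have hSpcont : Continuous ((shiftMap (A := A))^[p]) := hScont.iterate p
  have hSpinvL : ∀ x : ℤ → A, shiftInv^[p] (shiftMap^[p] x) = x :=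
    (Function.LeftInverse.iterate shiftInv_shiftMap p)
  have hSpinvR : ∀ x : ℤ → A, shiftMap^[p] (shiftInv^[p] x) = x :=
    (Function.LeftInverse.iterate shiftMap_shiftInv p)
  have hTcont : Continuous (prodShift (A := A) (A' := A')) := prodShift_cont
  have hTinj : Function.Injective (prodShift (A := A) (A' := A')) :=
    Function.LeftInverse.injective prodInv_prodShift
  -- the periodic orbit
  set yk : ℤ → (ℤ → A') := fun j n => y (n + j) with hykDef
  have hX'eq : X' = Set.range yk := by
    rw [hX']
    ext z
    simp only [Set.mem_setOf_eq, Set.mem_range]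
    constructor
    · rintro ⟨j, hj⟩
      exact ⟨j, (funext hj).symm⟩
    · rintro ⟨j, rfl⟩
      exact ⟨j, fun n => rfl⟩
  have hper_neg : ∀ n : ℤ, y (n - p) = y n := by
    intro n
    have h0 := hyper (n - p)
    rw [sub_add_cancel] at h0
    exact h0.symm
  have hyper' : ∀ c : ℤ, ∀ m : ℤ, y (m + c * p) = y m := by
    intro c
    induction c using Int.induction_on with
    | zero => simp
    | succ i ih =>
      intro m
      have h1 : m + ((i : ℤ) + 1) * p = (m + i * p) + p := by ring
      rw [h1, hyper, ih]
    | pred i ih =>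
      intro m
      have h1 : m + (-(i : ℤ) - 1) * p = (m + (-(i : ℤ)) * p) - p := by ring
      rw [h1, hper_neg, ih]
  have hykmod : ∀ a b : ℤ, (p : ℤ) ∣ (a - b) → yk a = yk b := by
    rintro a b ⟨c, hc⟩
    funext n
    show y (n + a) = y (n + b)
    have h1 : n + a = (n + b) + c * p := by linarith [hc]
    rw [h1, hyper' c]
  have hykinj : ∀ a b : ℤ, yk a = yk b → (p : ℤ) ∣ (a - b) := by
    intro a b hab
    have hs : ∀ m : ℤ, y (m + (a - b)) = y m := by
      intro m
      have h0 := congrFun hab (m - b)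
      simp only [hykDef] at h0
      have h1 : m - b + a = m + (a - b) := by ring
      have h2 : m - b + b = m := by ring
      rw [h1, h2] at h0
      exact h0
    set r := (a - b) % (p : ℤ) with hr
    have hr0 : 0 ≤ r := Int.emod_nonneg _ (by exact_mod_cast hp.ne')
    have hrp : r < p := Int.emod_lt_of_pos _ (by exact_mod_cast hp)
    have hsr : (a - b) - r = (p : ℤ) * ((a - b) / p) := by
      rw [hr]
      have := Int.mul_ediv_add_emod (a - b) (p : ℤ)
      linarith
    have hyr : ∀ m : ℤ, y (m + r) = y m := by
      intro m
      have h1 := hyper' ((a - b) / p) (m + r)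
      have h2 : m + r + ((a - b) / p) * p = m + (a - b) := by
        have h3 : ((a - b) / p) * (p : ℤ) = (a - b) - r := by linarith [hsr]
        rw [h3]; ring
      rw [h2, hs] at h1
      exact h1.symm
    by_cases hrz : r = 0
    · rw [hr] at hrz
      exact Int.dvd_of_emod_eq_zero hrz
    · exfalso
      have hrpos : 0 < r := lt_of_le_of_ne hr0 (Ne.symm hrz)
      have hle := hleast r.toNat (by omega) (by
        intro n
        have h1 := hyr n
        rwa [Int.toNat_of_nonneg hr0])
      omega
  have hykshift : ∀ j : ℤ, shiftMap (yk j) = yk (j + 1) := by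
    intro j
    funext n
    show y (n + 1 + j) = y (n + (j + 1))
    ring_nf
  have hykiter : ∀ (k : ℕ) (j : ℤ), shiftMap^[k] (yk j) = yk (j + k) := by
    intro k
    induction k with
    | zero => intro j; simp
    | succ k ih =>
      intro j
      rw [Function.iterate_succ_apply, hykshift, ih]
      congr 1
      push_cast
      ring
  have hfixX' : ∀ j : ℤ, shiftMap^[p] (yk j) = yk j := by
    intro j
    rw [hykiter]
    exact hykmod _ _ ⟨1, by ring⟩
  -- pieces
  have hpiece : ∀ (M : Set (ℤ → A)) (k : ℕ),
      prodShift^[k] '' (M ×ˢ ({yk 0} : Set (ℤ → A')))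
        = (shiftMap^[k] '' M) ×ˢ ({yk (k : ℤ)} : Set (ℤ → A')) := by
    intro M k
    have h1 : (fun z : (ℤ → A) × (ℤ → A') => (shiftMap^[k] z.1, shiftMap^[k] z.2))
        = prodShift^[k] := funext fun z => (prodShift_iter k z).symm
    calc prodShift^[k] '' (M ×ˢ ({yk 0} : Set (ℤ → A')))
        = (fun z : (ℤ → A) × (ℤ → A') => (shiftMap^[k] z.1, shiftMap^[k] z.2)) ''
            (M ×ˢ ({yk 0} : Set (ℤ → A'))) := by rw [h1]
      _ = (shiftMap^[k] '' M) ×ˢ (shiftMap^[k] '' ({yk 0} : Set (ℤ → A'))) :=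
          (Set.prod_image_image_eq).symm
      _ = (shiftMap^[k] '' M) ×ˢ ({yk (k : ℤ)} : Set (ℤ → A')) := by
          rw [Set.image_singleton, hykiter, zero_add]
  have hSkX : ∀ k : ℕ, (shiftMap (A := A))^[k] '' X = X := fun k => auxIterateImage hXinv k
  set Phi : Set (ℤ → A) → Set ((ℤ → A) × (ℤ → A')) :=
    fun M => ⋃ k ∈ Finset.range p, prodShift^[k] '' (M ×ˢ ({yk 0} : Set (ℤ → A')))
    with hPhiDef
  have hBinvGen : ∀ M : Set (ℤ → A), shiftMap^[p] '' M = M →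
      prodShift^[p] '' (M ×ˢ ({yk 0} : Set (ℤ → A'))) = M ×ˢ ({yk 0} : Set (ℤ → A')) := by
    intro M hMinv
    rw [hpiece, hMinv, hykmod (p : ℤ) 0 (by simp)]
  -- claim 1 : Phi of a minimal component is a minimal component
  have hPhiComp : ∀ M, MinComponent (shiftMap^[p]) X M →
      MinComponent prodShift (X ×ˢ X') (Phi M) := by
    intro M hM
    obtain ⟨hMX, hMne, hMcl, hMinv, hMmin⟩ := hM
    have hBinv := hBinvGen M hMinv
    refine ⟨?_, ?_, ?_, ?_, ?_⟩
    · simp only [hPhiDef]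
      refine Set.iUnion₂_subset fun k _ => ?_
      rw [hpiece]
      refine Set.prod_mono ?_ ?_
      · exact (Set.image_mono hMX).trans (hSkX k).subset
      · intro z hz
        rw [Set.mem_singleton_iff] at hz
        subst hz
        rw [hX'eq]
        exact ⟨(k : ℤ), rfl⟩
    · obtain ⟨x, hx⟩ := hMne
      refine ⟨(x, yk 0), ?_⟩
      simp only [hPhiDef, Set.mem_iUnion, Finset.mem_range]
      refine ⟨0, hp, ?_⟩
      simp only [Function.iterate_zero, Set.image_id]
      exact Set.mk_mem_prod hx rfl
    · simp only [hPhiDef]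
      refine isClosed_biUnion_finset fun k _ => ?_
      rw [hpiece]
      exact (auxClosedImage (hScont.iterate k) hMcl).prod isClosed_singleton
    · simp only [hPhiDef]
      exact auxShuffle hp hBinv
    · intro Z hZsub hZne hZcl hZinv
      obtain ⟨⟨w, z⟩, hwz⟩ := hZne
      obtain ⟨k, hk, hwzk⟩ : ∃ k, k < p ∧
          (w, z) ∈ (shiftMap^[k] '' M) ×ˢ ({yk (k : ℤ)} : Set (ℤ → A')) := by
        have h0 := hZsub hwz
        simp only [hPhiDef, Set.mem_iUnion, Finset.mem_range] at h0
        obtain ⟨k, hk, hmem⟩ := h0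
        rw [hpiece] at hmem
        exact ⟨k, hk, hmem⟩
      have hz : z = yk (k : ℤ) := hwzk.2
      subst hz
      set F := {x : ℤ → A | (x, yk (k : ℤ)) ∈ Z} with hFdef
      have hFsub : F ⊆ shiftMap^[k] '' M := by
        intro x hx
        have h0 := hZsub hx
        simp only [hPhiDef, Set.mem_iUnion, Finset.mem_range] at h0
        obtain ⟨k', hk', hmem⟩ := h0
        rw [hpiece] at hmem
        have h2 : yk ((k : ℕ) : ℤ) = yk ((k' : ℕ) : ℤ) := hmem.2
        have h3 : k = k' := auxSmallDvd hk hk' (hykinj _ _ h2)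
        rw [h3]
        exact hmem.1
      have hFne : F.Nonempty := ⟨w, hwz⟩
      have hFcl : IsClosed F := hZcl.preimage (continuous_id.prodMk continuous_const)
      have hTiterZ : ∀ m : ℕ, prodShift^[m] '' Z = Z := fun m => auxIterateImage hZinv m
      have hFinv : shiftMap^[p] '' F = F := by
        apply Set.Subset.antisymm
        · rintro _ ⟨x, hx, rfl⟩
          show (shiftMap^[p] x, yk (k : ℤ)) ∈ Z
          have h1 : prodShift^[p] (x, yk (k : ℤ)) ∈ prodShift^[p] '' Z :=
            Set.mem_image_of_mem _ hx
          rw [hTiterZ] at h1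
          have h2 : prodShift^[p] (x, yk (k : ℤ)) = (shiftMap^[p] x, yk (k : ℤ)) := by
            rw [prodShift_iter]
            simp [hfixX']
          rwa [h2] at h1
        · intro x hx
          have h1 : (x, yk (k : ℤ)) ∈ prodShift^[p] '' Z := by rw [hTiterZ]; exact hx
          obtain ⟨⟨x', z'⟩, hx', heq⟩ := h1
          rw [prodShift_iter] at heq
          obtain ⟨k'', hz'⟩ : ∃ k'' : ℤ, z' = yk k'' := by
            have h0 := hZsub hx'
            simp only [hPhiDef, Set.mem_iUnion, Finset.mem_range] at h0
            obtain ⟨k'', _, hmem⟩ := h0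
            rw [hpiece] at hmem
            exact ⟨(k'' : ℤ), hmem.2⟩
          subst hz'
          have h2 : yk k'' = yk (k : ℤ) := by
            rw [← hfixX' k'']
            exact congrArg Prod.snd heq
          refine ⟨x', ?_, congrArg Prod.fst heq⟩
          show (x', yk (k : ℤ)) ∈ Z
          rw [← h2]
          exact hx'
      have hcommSk : ∀ x : ℤ → A,
          shiftMap^[p] (shiftMap^[k] x) = shiftMap^[k] (shiftMap^[p] x) := by
        intro x
        rw [← Function.iterate_add_apply, ← Function.iterate_add_apply, Nat.add_comm]
      have hSkM : MinComponent (shiftMap^[p]) X (shiftMap^[k] '' M) := by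
        refine auxMinImage (hScont.iterate k) (shiftInv_cont.iterate k)
          (Function.LeftInverse.iterate shiftMap_shiftInv k)
          (Function.LeftInverse.iterate shiftInv_shiftMap k)
          hcommSk ?_ ⟨hMX, hMne, hMcl, hMinv, hMmin⟩
        rw [hSkX k]
      have hFeq : F = shiftMap^[k] '' M := hSkM.2.2.2.2 F hFsub hFne hFcl hFinv
      have hpieceZ : (shiftMap^[k] '' M) ×ˢ ({yk (k : ℤ)} : Set (ℤ → A')) ⊆ Z := by
        rintro ⟨x, z⟩ ⟨hx1, hx2⟩
        rw [Set.mem_singleton_iff] at hx2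
        subst hx2
        rw [← hFeq] at hx1
        exact hx1
      apply Set.Subset.antisymm hZsub
      simp only [hPhiDef]
      refine Set.iUnion₂_subset fun j hj => ?_
      simp only [Finset.mem_range] at hj
      have hjk : (j + p - k) + k = j + p := by omega
      have h1 : prodShift^[j] '' (M ×ˢ ({yk 0} : Set (ℤ → A')))
          = prodShift^[(j + p - k) + k] '' (M ×ˢ ({yk 0} : Set (ℤ → A'))) := by
        rw [hjk, Function.iterate_add, Set.image_comp, hBinv]
      rw [h1, Function.iterate_add, Set.image_comp]
      have h2 : prodShift^[k] '' (M ×ˢ ({yk 0} : Set (ℤ → A'))) ⊆ Z := by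
        rw [hpiece]; exact hpieceZ
      calc prodShift^[j + p - k] '' (prodShift^[k] '' (M ×ˢ ({yk 0} : Set (ℤ → A'))))
          ⊆ prodShift^[j + p - k] '' Z := Set.image_mono h2
        _ = Z := hTiterZ _
  -- claim 2 : fiber recovery
  have hfiber : ∀ M, MinComponent (shiftMap^[p]) X M →
      {x : ℤ → A | (x, yk 0) ∈ Phi M} = M := by
    intro M hM
    ext x
    simp only [hPhiDef, Set.mem_setOf_eq, Set.mem_iUnion, Finset.mem_range]
    constructor
    · rintro ⟨k, hk, hmem⟩
      rw [hpiece] at hmem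
      have h2 : yk ((0 : ℕ) : ℤ) = yk ((k : ℕ) : ℤ) := by
        have := hmem.2
        simpa using this
      have h3 : 0 = k := auxSmallDvd hp hk (hykinj _ _ h2)
      subst h3
      simpa using hmem.1
    · intro hx
      refine ⟨0, hp, ?_⟩
      simp only [Function.iterate_zero, Set.image_id]
      exact Set.mk_mem_prod hx rfl
  -- claim 3 : every component of the product arises this way
  have hsurj : ∀ Y, MinComponent prodShift (X ×ˢ X') Y →
      ∃ M, MinComponent (shiftMap^[p]) X M ∧ Phi M = Y := by
    intro Y hY
    obtain ⟨hYsub, hYne, hYcl, hYinv, hYmin⟩ := hY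
    have hTiterY : ∀ m : ℕ, prodShift^[m] '' Y = Y := fun m => auxIterateImage hYinv m
    set F := {x : ℤ → A | (x, yk 0) ∈ Y} with hFdef
    have hFX : F ⊆ X := fun x hx => (hYsub hx).1
    have hFne : F.Nonempty := by
      obtain ⟨⟨x, z⟩, hxz⟩ := hYne
      have hzX' := (hYsub hxz).2
      rw [hX'eq] at hzX'
      obtain ⟨j, rfl⟩ := hzX'
      set j' := j % (p : ℤ) with hj'def
      have hj'0 : 0 ≤ j' := Int.emod_nonneg _ (by exact_mod_cast hp.ne')
      have hj'p : j' < p := Int.emod_lt_of_pos _ (by exact_mod_cast hp)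
      have hzj' : yk j = yk j' := by
        apply hykmod
        refine ⟨j / p, ?_⟩
        have := Int.mul_ediv_add_emod j (p : ℤ)
        rw [hj'def]
        linarith
      set m := p - j'.toNat with hmdef
      have hmem := Set.mem_image_of_mem (prodShift^[m]) hxz
      rw [hTiterY] at hmem
      refine ⟨shiftMap^[m] x, ?_⟩
      show (shiftMap^[m] x, yk 0) ∈ Y
      have heq : prodShift^[m] (x, yk j) = (shiftMap^[m] x, yk 0) := by
        rw [prodShift_iter]
        simp only [Prod.mk.injEq, true_and]
        rw [hzj', hykiter]
        apply hykmod
        have htn : (j'.toNat : ℤ) = j' := Int.toNat_of_nonneg hj'0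
        have hmz : (m : ℤ) = (p : ℤ) - j' := by
          rw [hmdef]
          push_cast [htn]
          omega
        rw [hmz]
        exact ⟨1, by ring⟩
      rwa [heq] at hmem
    have hFcl : IsClosed F := hYcl.preimage (continuous_id.prodMk continuous_const)
    have hFinv : shiftMap^[p] '' F = F := by
      apply Set.Subset.antisymm
      · rintro _ ⟨x, hx, rfl⟩
        show (shiftMap^[p] x, yk 0) ∈ Y
        have h1 : prodShift^[p] (x, yk 0) ∈ prodShift^[p] '' Y := Set.mem_image_of_mem _ hx
        rw [hTiterY] at h1
        have h2 : prodShift^[p] (x, yk 0) = (shiftMap^[p] x, yk 0) := by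
          rw [prodShift_iter]
          simp [hfixX']
        rwa [h2] at h1
      · intro x hx
        have h1 : (x, yk 0) ∈ prodShift^[p] '' Y := by rw [hTiterY]; exact hx
        obtain ⟨⟨x', z'⟩, hx', heq⟩ := h1
        rw [prodShift_iter] at heq
        obtain ⟨k'', hz'⟩ : ∃ k'' : ℤ, z' = yk k'' := by
          have h0 := (hYsub hx').2
          rw [hX'eq] at h0
          obtain ⟨k'', hk''⟩ := h0
          exact ⟨k'', hk''.symm⟩
        subst hz'
        have h2 : yk k'' = yk 0 := by
          rw [← hfixX' k'']
          exact congrArg Prod.snd heq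
        refine ⟨x', ?_, congrArg Prod.fst heq⟩
        show (x', yk 0) ∈ Y
        rw [← h2]
        exact hx'
    obtain ⟨M, hMF, hMne, hMcl, hMinv, hMmin⟩ :=
      auxExistsMin hSpcont hSpinvL hSpinvR hFne hFcl hFinv
    have hMcomp : MinComponent (shiftMap^[p]) X M := ⟨hMF.trans hFX, hMne, hMcl, hMinv, hMmin⟩
    refine ⟨M, hMcomp, ?_⟩
    have hPhisub : Phi M ⊆ Y := by
      simp only [hPhiDef]
      refine Set.iUnion₂_subset fun k _ => ?_
      have hBY : M ×ˢ ({yk 0} : Set (ℤ → A')) ⊆ Y := by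
        rintro ⟨x, z⟩ ⟨hx1, hx2⟩
        rw [Set.mem_singleton_iff] at hx2
        subst hx2
        exact hMF hx1
      calc prodShift^[k] '' (M ×ˢ ({yk 0} : Set (ℤ → A')))
          ⊆ prodShift^[k] '' Y := Set.image_mono hBY
        _ = Y := hTiterY k
    have hPhiM := hPhiComp M hMcomp
    exact hYmin _ hPhisub hPhiM.2.1 hPhiM.2.2.1 hPhiM.2.2.2.1
  -- a base component
  obtain ⟨M₀, hM₀X, hM₀ne, hM₀cl, hM₀inv, hM₀min⟩ :=
    auxExistsMin hSpcont hSpinvL hSpinvR hXne hXcl (hSkX p)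
  have hM₀comp : MinComponent (shiftMap^[p]) X M₀ := ⟨hM₀X, hM₀ne, hM₀cl, hM₀inv, hM₀min⟩
  have hSkM₀comp : ∀ k : ℕ, MinComponent (shiftMap^[p]) X (shiftMap^[k] '' M₀) := by
    intro k
    refine auxMinImage (hScont.iterate k) (shiftInv_cont.iterate k)
      (Function.LeftInverse.iterate shiftMap_shiftInv k)
      (Function.LeftInverse.iterate shiftInv_shiftMap k)
      (fun x => by
        rw [← Function.iterate_add_apply, ← Function.iterate_add_apply, Nat.add_comm])
      ?_ hM₀comp
    rw [hSkX k]
  -- the cover of X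
  have hcov : X = ⋃ k ∈ Finset.range p, shiftMap^[k] '' M₀ := by
    set U := ⋃ k ∈ Finset.range p, shiftMap^[k] '' M₀ with hUdef
    have hUX : U ⊆ X := Set.iUnion₂_subset fun k _ =>
      (Set.image_mono hM₀X).trans (hSkX k).subset
    have hUcl : IsClosed U :=
      isClosed_biUnion_finset fun k _ => auxClosedImage (hScont.iterate k) hM₀cl
    have hUinv : shiftMap '' U = U := auxShuffle hp hM₀inv
    rcases hXmin U hUX hUcl hUinv with h | h
    · exfalso
      obtain ⟨x, hx⟩ := hM₀ne
      have hxU : x ∈ U := by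
        simp only [hUdef, Set.mem_iUnion, Finset.mem_range]
        exact ⟨0, hp, by simpa using hx⟩
      rw [h] at hxU
      exact hxU
    · exact h.symm
  -- finiteness of S^p components
  have hMMsub : {M : Set (ℤ → A) | MinComponent (shiftMap^[p]) X M}
      ⊆ (fun k : ℕ => shiftMap^[k] '' M₀) '' ↑(Finset.range p) := by
    intro M hM
    obtain ⟨x, hx⟩ := hM.2.1
    have hxX : x ∈ X := hM.1 hx
    rw [hcov] at hxX
    simp only [Set.mem_iUnion, Finset.mem_range] at hxX
    obtain ⟨k, hk, hxk⟩ := hxX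
    have heq := auxMinEq hSpinj hM (hSkM₀comp k) ⟨x, hx, hxk⟩
    exact ⟨k, by simpa using hk, heq.symm⟩
  have hMMfin : {M : Set (ℤ → A) | MinComponent (shiftMap^[p]) X M}.Finite :=
    Set.Finite.subset ((Finset.range p).finite_toSet.image _) hMMsub
  -- the components of the product are exactly the images under Phi
  have hCCeq : {Y : Set ((ℤ → A) × (ℤ → A')) | MinComponent prodShift (X ×ˢ X') Y}
      = Phi '' {M : Set (ℤ → A) | MinComponent (shiftMap^[p]) X M} := by
    ext Y
    simp only [Set.mem_setOf_eq, Set.mem_image]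
    constructor
    · intro hY
      obtain ⟨M, hM, hPhi⟩ := hsurj Y hY
      exact ⟨M, hM, hPhi⟩
    · rintro ⟨M, hM, rfl⟩
      exact hPhiComp M hM
  have hInjOn : Set.InjOn Phi {M : Set (ℤ → A) | MinComponent (shiftMap^[p]) X M} := by
    intro M hM M' hM' hMM'
    rw [← hfiber M hM, ← hfiber M' hM', hMM']
  refine ⟨?_, ?_, ?_, ?_⟩
  · rw [hCCeq]
    exact hMMfin.image Phi
  · apply Set.Subset.antisymm
    · intro z hz
      rw [Set.mem_sUnion] at hz
      obtain ⟨Y, hY, hzY⟩ := hz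
      exact hY.1 hzY
    · rintro ⟨x, z⟩ hxz
      obtain ⟨hxX, hzX'⟩ := hxz
      rw [hX'eq] at hzX'
      obtain ⟨j, rfl⟩ := hzX'
      set j' := j % (p : ℤ) with hj'def
      have hj'0 : 0 ≤ j' := Int.emod_nonneg _ (by exact_mod_cast hp.ne')
      have hj'p : j' < p := Int.emod_lt_of_pos _ (by exact_mod_cast hp)
      have hzj' : yk j = yk j' := by
        apply hykmod
        refine ⟨j / p, ?_⟩
        have := Int.mul_ediv_add_emod j (p : ℤ)
        rw [hj'def]
        linarith
      have hxcov : x ∈ X := hxX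
      rw [hcov] at hxcov
      simp only [Set.mem_iUnion, Finset.mem_range] at hxcov
      obtain ⟨k, hk, hxk⟩ := hxcov
      set jn := j'.toNat with hjndef
      have hjnp : jn < p := by omega
      set m := k + p - jn with hmdef
      refine Set.mem_sUnion.2 ⟨Phi (shiftMap^[m] '' M₀), hPhiComp _ (hSkM₀comp m), ?_⟩
      simp only [hPhiDef, Set.mem_iUnion, Finset.mem_range]
      refine ⟨jn, hjnp, ?_⟩
      rw [hpiece]
      constructor
      · show x ∈ shiftMap^[jn] '' (shiftMap^[m] '' M₀)
        rw [← Set.image_comp, ← Function.iterate_add]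
        have hadd : jn + m = k + p := by omega
        rw [hadd, Function.iterate_add, Set.image_comp, hM₀inv]
        exact hxk
      · show yk j ∈ ({yk ((jn : ℕ) : ℤ)} : Set (ℤ → A'))
        rw [Set.mem_singleton_iff, hzj']
        exact congrArg yk (Int.toNat_of_nonneg hj'0).symm
  · intro Y hY Y' hY' hne
    by_contra hnd
    rw [Set.not_disjoint_iff_nonempty_inter] at hnd
    exact hne (auxMinEq hTinj hY hY' hnd)
  · show numMinComponents prodShift (X ×ˢ X') = numMinComponents (shiftMap^[p]) X
    unfold numMinComponents
    rw [hCCeq]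
    exact Set.ncard_image_of_injOn hInjOn
end

section
/- Let (X,S) be a Boshernitzan subshift over a finite alphabet 𝒜 with unique shift-invariant Borel probability measure μ, let m ∈ ℕ, let q be the number of S^m-minimal components of X, and let X_j be one of these components. Then μ(X_j) = 1/q, the measure μ_j := q·μ|_{X_j} is an S^m-invariant Borel probability measure on X_j, и limsup_{k→∞} k·min{ μ_j([u]) : u ∈ ℒ_{mk}(X) with [u] ⊆ X_j } > 0; consequently (X_j, S^m), viewed as a subshift over the alphabet ℒ_m(X) via the m-block recoding, satisfies the Boshernitzan condition. -/
open MeasureTheory Filter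
open scoped ENNReal

/-- The `m`-block recoding of a sequence: `x ↦ (x_{[jm, (j+1)m−1]})_{j∈ℤ}`. -/
def blockMap {A : Type*} (m : ℕ) (x : ℤ → A) : ℤ → (Fin m → A) :=
  fun j i => x (j * (m : ℤ) + (i : ℕ))

set_option linter.unusedSectionVars false
set_option maxHeartbeats 1000000

section Basic
variable {A : Type*}

lemma shiftMap_iterate (k : ℕ) (x : ℤ → A) (n : ℤ) : (shiftMap^[k]) x n = x (n + k) := by
  induction k generalizing x n with
  | zero => simp
  | succ k ih =>
    rw [Function.iterate_succ_apply]
    rw [ih]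
    simp [shiftMap]
    ring_nf

lemma shiftMap_bijective : Function.Bijective (shiftMap (A := A)) := by
  constructor
  · intro x y h
    funext n
    have := congrFun h (n - 1)
    simpa [shiftMap] using this
  · intro y
    exact ⟨fun n => y (n - 1), funext fun n => by simp [shiftMap]⟩

lemma shiftMap_iter_bijective (k : ℕ) : Function.Bijective (shiftMap^[k] : (ℤ → A) → ℤ → A) :=
  shiftMap_bijective.iterate k

variable [TopologicalSpace A]

lemma shiftMap_continuous : Continuous (shiftMap (A := A)) :=
  continuous_pi fun n => continuous_apply (n + 1)

lemma shiftMap_iter_continuous (k : ℕ) : Continuous (shiftMap^[k] : (ℤ → A) → ℤ → A) :=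
  shiftMap_continuous.iterate k

lemma shiftInv_continuous : Continuous (fun (x : ℤ → A) n => x (n - 1)) :=
  continuous_pi fun n => continuous_apply (n - 1)

end Basic

section Meas
variable {A : Type*} [Fintype A] [TopologicalSpace A] [DiscreteTopology A]
  [MeasurableSpace A] [BorelSpace A]

lemma shiftMap_measurable : Measurable (shiftMap (A := A)) := shiftMap_continuous.measurable

lemma map_inv_eq {μ : Measure (ℤ → A)} (hinv : Measure.map shiftMap μ = μ) :
    Measure.map (fun (x : ℤ → A) n => x (n - 1)) μ = μ := by
  conv_lhs => rw [← hinv]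
  rw [Measure.map_map shiftInv_continuous.measurable shiftMap_measurable]
  have : (fun (x : ℤ → A) n => x (n - 1)) ∘ shiftMap = id := by
    funext x n; simp [shiftMap]
  rw [this, Measure.map_id]

omit [Fintype A] [TopologicalSpace A] [DiscreteTopology A] [MeasurableSpace A] [BorelSpace A] in
lemma image_shift_eq_preimage (W : Set (ℤ → A)) :
    shiftMap '' W = (fun (x : ℤ → A) n => x (n - 1)) ⁻¹' W := by
  ext x
  constructor
  · rintro ⟨y, hy, rfl⟩
    have : (fun n => shiftMap y (n - 1)) = y := by funext n; simp [shiftMap]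
    simpa [Set.mem_preimage, this] using hy
  · intro hx
    refine ⟨fun n => x (n - 1), hx, ?_⟩
    funext n; simp [shiftMap]

lemma measure_image_shift {μ : Measure (ℤ → A)} (hinv : Measure.map shiftMap μ = μ)
    {W : Set (ℤ → A)} (hW : MeasurableSet W) :
    μ (shiftMap '' W) = μ W := by
  rw [image_shift_eq_preimage, ← Measure.map_apply shiftInv_continuous.measurable hW,
    map_inv_eq hinv]

lemma measurableSet_image_shift_iter (k : ℕ) {W : Set (ℤ → A)} (hW : MeasurableSet W) :
    MeasurableSet ((shiftMap^[k]) '' W) := by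
  induction k with
  | zero => simpa
  | succ k ih =>
    rw [Function.iterate_succ', Set.image_comp, image_shift_eq_preimage]
    exact ih.preimage shiftInv_continuous.measurable

lemma measure_image_shift_iter {μ : Measure (ℤ → A)} (hinv : Measure.map shiftMap μ = μ)
    (k : ℕ) {W : Set (ℤ → A)} (hW : MeasurableSet W) :
    μ ((shiftMap^[k]) '' W) = μ W := by
  induction k with
  | zero => simp
  | succ k ih =>
    rw [Function.iterate_succ', Set.image_comp,
      measure_image_shift hinv (measurableSet_image_shift_iter k hW), ih]

lemma map_iterate_eq {μ : Measure (ℤ → A)} (hinv : Measure.map shiftMap μ = μ) (k : ℕ) :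
    Measure.map (shiftMap^[k]) μ = μ := by
  induction k with
  | zero => simp [Measure.map_id]
  | succ k ih =>
    rw [Function.iterate_succ', ← Measure.map_map shiftMap_measurable
      (shiftMap_iter_continuous k).measurable, ih, hinv]

end Meas

section Comp
variable {A : Type*} [Fintype A] [TopologicalSpace A] [DiscreteTopology A]

lemma minComponent_inter_eq {α : Type*} [TopologicalSpace α] {T : α → α}
    (hTinj : Function.Injective T) {X W1 W2 : Set α}
    (h1 : MinComponent T X W1) (h2 : MinComponent T X W2)
    (hne : (W1 ∩ W2).Nonempty) : W1 = W2 := by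
  have hcl : IsClosed (W1 ∩ W2) := h1.2.2.1.inter h2.2.2.1
  have hinv : T '' (W1 ∩ W2) = W1 ∩ W2 := by
    rw [Set.image_inter hTinj, h1.2.2.2.1, h2.2.2.2.1]
  have e1 := h1.2.2.2.2 _ Set.inter_subset_left hne hcl hinv
  have e2 := h2.2.2.2.2 _ Set.inter_subset_right hne hcl hinv
  rw [← e1, e2]

lemma exists_minComponent (m : ℕ) (X : Set (ℤ → A)) (hne : X.Nonempty) (hcl : IsClosed X)
    (hXinv : (shiftMap^[m]) '' X = X) : ∃ Y, MinComponent (shiftMap^[m]) X Y := by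
  have hTbij := shiftMap_iter_bijective (A := A) m
  set T := (shiftMap^[m] : (ℤ → A) → ℤ → A) with hT
  set S : Set (Set (ℤ → A)) := {Z | Z ⊆ X ∧ Z.Nonempty ∧ IsClosed Z ∧ T '' Z = Z} with hS
  have hzorn : ∀ c ⊆ S, IsChain (· ⊆ ·) c → c.Nonempty →
      ∃ lb ∈ S, ∀ s ∈ c, lb ⊆ s := by
    intro c hcS hchain hcne
    have hcS' : ∀ Z ∈ c, Z ⊆ X ∧ Z.Nonempty ∧ IsClosed Z ∧ T '' Z = Z := fun Z hZ => hcS hZ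
    have hdir : DirectedOn (· ⊇ ·) c := by
      rintro x hx y hy
      rcases eq_or_ne x y with rfl | hxy
      · exact ⟨x, hx, Set.Subset.rfl, Set.Subset.rfl⟩
      · rcases hchain hx hy hxy with h | h
        · exact ⟨x, hx, Set.Subset.rfl, h⟩
        · exact ⟨y, hy, h, Set.Subset.rfl⟩
    have : Nonempty c := hcne.to_subtype
    have hnei : (⋂₀ c).Nonempty :=
      IsCompact.nonempty_sInter_of_directed_nonempty_isCompact_isClosed hdir
        (fun U hU => (hcS' U hU).2.1) (fun U hU => (hcS' U hU).2.2.1.isCompact)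
        (fun U hU => (hcS' U hU).2.2.1)
    obtain ⟨Z0, hZ0⟩ := hcne
    refine ⟨⋂₀ c, ⟨(Set.sInter_subset_of_mem hZ0).trans (hcS' Z0 hZ0).1, hnei,
      isClosed_sInter (fun U hU => (hcS' U hU).2.2.1), ?_⟩,
      fun s hs => Set.sInter_subset_of_mem hs⟩
    apply Set.Subset.antisymm
    · rintro _ ⟨y, hy, rfl⟩ Z hZ
      rw [← (hcS' Z hZ).2.2.2]
      exact ⟨y, hy Z hZ, rfl⟩
    · intro x hx
      obtain ⟨w, hw⟩ := hTbij.surjective x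
      refine ⟨w, fun Z hZ => ?_, hw⟩
      have hx' : x ∈ Z := hx Z hZ
      rw [← (hcS' Z hZ).2.2.2] at hx'
      obtain ⟨w', hw', hww⟩ := hx'
      have hww' : w' = w := hTbij.injective (hww.trans hw.symm)
      rwa [hww'] at hw' 
  obtain ⟨Y, hYX, hYmin⟩ := zorn_superset_nonempty S hzorn X ⟨Set.Subset.rfl, hne, hcl, hXinv⟩
  obtain ⟨hY1, hY2, hY3, hY4⟩ := hYmin.1
  refine ⟨Y, hY1, hY2, hY3, hY4, fun Z hZY hZne hZcl hZinv => ?_⟩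
  exact Set.Subset.antisymm hZY (hYmin.2 ⟨hZY.trans hY1, hZne, hZcl, hZinv⟩ hZY)

lemma iter_image_X (X : Set (ℤ → A)) (hXinv : shiftMap '' X = X) (i : ℕ) :
    (shiftMap^[i]) '' X = X := by
  induction i with
  | zero => simp
  | succ i ih => rw [Function.iterate_succ', Set.image_comp, ih, hXinv]

lemma minComponent_image (m : ℕ) (X : Set (ℤ → A)) (hXinv : shiftMap '' X = X)
    {Y : Set (ℤ → A)} (hY : MinComponent (shiftMap^[m]) X Y) (i : ℕ) :
    MinComponent (shiftMap^[m]) X ((shiftMap^[i]) '' Y) := by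
  obtain ⟨hY1, hY2, hY3, hY4, hY5⟩ := hY
  have hgc := shiftMap_iter_continuous (A := A) i
  have hgi := (shiftMap_iter_bijective (A := A) i).injective
  have hcomm : ∀ x : ℤ → A, (shiftMap^[m]) ((shiftMap^[i]) x) = (shiftMap^[i]) ((shiftMap^[m]) x) := by
    intro x
    rw [← Function.iterate_add_apply, ← Function.iterate_add_apply, Nat.add_comm]
  have hcommS : ∀ W : Set (ℤ → A),
      (shiftMap^[m]) '' ((shiftMap^[i]) '' W) = (shiftMap^[i]) '' ((shiftMap^[m]) '' W) := by
    intro W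
    rw [← Set.image_comp, ← Set.image_comp]
    exact Set.image_congr fun x _ => hcomm x
  refine ⟨?_, hY2.image _, ?_, ?_, ?_⟩
  · intro x hx
    have : (shiftMap^[i]) '' Y ⊆ (shiftMap^[i]) '' X := Set.image_mono hY1
    exact (iter_image_X X hXinv i) ▸ this hx
  · exact ((hY3.isCompact).image hgc).isClosed
  · rw [hcommS, hY4]
  · intro Z hZY hZne hZcl hZinv
    set W := (shiftMap^[i]) ⁻¹' Z ∩ Y with hW
    have himW : (shiftMap^[i]) '' W = Z := by
      rw [hW, Set.image_preimage_inter]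
      exact Set.inter_eq_self_of_subset_left hZY
    have hWne : W.Nonempty := by
      obtain ⟨z, hz⟩ := hZne
      obtain ⟨y, hy, rfl⟩ := hZY hz
      exact ⟨y, hz, hy⟩
    have hWcl : IsClosed W := (hZcl.preimage hgc).inter hY3
    have hWinv : (shiftMap^[m]) '' W = W := by
      apply Set.Subset.antisymm
      · rintro _ ⟨w, ⟨hw1, hw2⟩, rfl⟩
        constructor
        · show (shiftMap^[i]) ((shiftMap^[m]) w) ∈ Z
          rw [← hcomm, ← hZinv]
          exact ⟨_, hw1, rfl⟩
        · rw [← hY4]; exact ⟨w, hw2, rfl⟩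
      · rintro x ⟨hx1, hx2⟩
        rw [← hY4] at hx2
        obtain ⟨w, hw, rfl⟩ := hx2
        refine ⟨w, ⟨?_, hw⟩, rfl⟩
        show (shiftMap^[i]) w ∈ Z
        rw [← hZinv] at hx1
        obtain ⟨z', hz', hz'e⟩ := hx1
        have : z' = (shiftMap^[i]) w := by
          apply (shiftMap_iter_bijective (A := A) m).injective
          rw [hz'e, hcomm]
        rwa [← this]
    have := hY5 W (Set.inter_subset_right) hWne hWcl hWinv
    rw [← himW, this]

end Comp

section Comp2
variable {A : Type*} [Fintype A] [TopologicalSpace A] [DiscreteTopology A]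

lemma cover_by_components (m : ℕ) (hm : 0 < m) (X : Set (ℤ → A))
    (hXinv : shiftMap '' X = X) (hmin : MinimalOn shiftMap X)
    {Y : Set (ℤ → A)} (hY : MinComponent (shiftMap^[m]) X Y) :
    X = ⋃ i : Fin m, (shiftMap^[(i : ℕ)]) '' Y := by
  set C : ℕ → Set (ℤ → A) := fun i => (shiftMap^[i]) '' Y with hC
  set U : Set (ℤ → A) := ⋃ i : Fin m, C (i : ℕ) with hU
  have hcomp : ∀ i : ℕ, MinComponent (shiftMap^[m]) X (C i) :=
    fun i => minComponent_image m X hXinv hY i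
  have hUX : U ⊆ X := Set.iUnion_subset fun i => (hcomp i).1
  have hUcl : IsClosed U := isClosed_iUnion_of_finite fun i => (hcomp (i : ℕ)).2.2.1
  have hCm : C m = C 0 := by
    simp only [hC]
    rw [hY.2.2.2.1]
    simp
  have hSC : ∀ i : ℕ, shiftMap '' C i = C (i + 1) := by
    intro i
    simp only [hC]
    rw [← Set.image_comp, ← Function.iterate_succ']
  have hSU : shiftMap '' U = U := by
    rw [hU, Set.image_iUnion]
    apply Set.Subset.antisymm
    · apply Set.iUnion_subset
      intro i
      rw [hSC]
      rcases Nat.lt_or_ge ((i : ℕ) + 1) m with h | h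
      · exact Set.subset_iUnion_of_subset ⟨(i : ℕ) + 1, h⟩ (by simp)
      · have : (i : ℕ) + 1 = m := Nat.le_antisymm i.2 h
        rw [this, hCm]
        exact Set.subset_iUnion_of_subset ⟨0, hm⟩ (by simp)
    · apply Set.iUnion_subset
      intro i
      rcases Nat.eq_zero_or_pos (i : ℕ) with h | h
      · have : C (i : ℕ) = shiftMap '' C (m - 1) := by
          rw [hSC, Nat.sub_add_cancel hm, hCm, h]
        rw [this]
        exact Set.subset_iUnion_of_subset ⟨m - 1, Nat.sub_lt hm Nat.one_pos⟩ (by simp)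
      · have : C (i : ℕ) = shiftMap '' C ((i : ℕ) - 1) := by
          rw [hSC, Nat.sub_add_cancel h]
        rw [this]
        exact Set.subset_iUnion_of_subset ⟨(i : ℕ) - 1, lt_of_le_of_lt (Nat.sub_le _ _) i.2⟩
          (by simp)
  rcases hmin U hUX hUcl hSU with h | h
  · exfalso
    have : Y ⊆ U := Set.subset_iUnion_of_subset ⟨0, hm⟩ (by simp [hC])
    obtain ⟨y, hy⟩ := hY.2.1
    exact absurd (h ▸ this hy) (Set.notMem_empty y)
  · exact h.symm

lemma classify_components (m : ℕ) (hm : 0 < m) (X : Set (ℤ → A))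
    (hXinv : shiftMap '' X = X) (hmin : MinimalOn shiftMap X)
    {Y : Set (ℤ → A)} (hY : MinComponent (shiftMap^[m]) X Y)
    {W : Set (ℤ → A)} (hW : MinComponent (shiftMap^[m]) X W) :
    ∃ i : Fin m, W = (shiftMap^[(i : ℕ)]) '' Y := by
  obtain ⟨w, hw⟩ := hW.2.1
  have hwX : w ∈ X := hW.1 hw
  rw [cover_by_components m hm X hXinv hmin hY] at hwX
  obtain ⟨s, ⟨i, rfl⟩, hws⟩ := hwX
  exact ⟨i, minComponent_inter_eq (shiftMap_iter_bijective m).injective hW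
    (minComponent_image m X hXinv hY (i : ℕ)) ⟨w, hw, hws⟩⟩

end Comp2

section MeasComp
variable {A : Type*} [Fintype A] [TopologicalSpace A] [DiscreteTopology A]
  [MeasurableSpace A] [BorelSpace A]

lemma components_finite (m : ℕ) (hm : 0 < m) (X : Set (ℤ → A))
    (hXinv : shiftMap '' X = X) (hmin : MinimalOn shiftMap X)
    {Y : Set (ℤ → A)} (hY : MinComponent (shiftMap^[m]) X Y) :
    {W : Set (ℤ → A) | MinComponent (shiftMap^[m]) X W}.Finite := by
  apply Set.Finite.subset (Set.finite_range (fun i : Fin m => (shiftMap^[(i : ℕ)]) '' Y))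
  intro W hW
  obtain ⟨i, hi⟩ := classify_components m hm X hXinv hmin hY hW
  exact ⟨i, hi.symm⟩

lemma measure_component_eq (m : ℕ) (hm : 0 < m) (X : Set (ℤ → A))
    (hXne : X.Nonempty) (hXcl : IsClosed X)
    (hXinv : shiftMap '' X = X) (hmin : MinimalOn shiftMap X)
    (μ : Measure (ℤ → A)) (hprob : IsProbabilityMeasure μ) (hsupp : μ X = 1)
    (hinv : Measure.map shiftMap μ = μ)
    {Xj : Set (ℤ → A)} (hXj : MinComponent (shiftMap^[m]) X Xj) :
    (({W : Set (ℤ → A) | MinComponent (shiftMap^[m]) X W}.ncard : ℝ≥0∞)) * μ Xj = 1 := by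
  obtain ⟨Y, hY⟩ := exists_minComponent m X hXne hXcl (iter_image_X X hXinv m)
  set 𝒞 := {W : Set (ℤ → A) | MinComponent (shiftMap^[m]) X W} with h𝒞
  have hfin : 𝒞.Finite := components_finite m hm X hXinv hmin hY
  have hmeas : ∀ W ∈ 𝒞, MeasurableSet W := fun W hW => hW.2.2.1.measurableSet
  have hdisj : (hfin.toFinset : Set (Set (ℤ → A))).PairwiseDisjoint id := by
    intro W1 h1 W2 h2 hne
    rw [Set.Finite.coe_toFinset] at h1 h2
    rw [Function.onFun, Set.disjoint_iff_inter_eq_empty]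
    by_contra hcon
    exact hne (minComponent_inter_eq (shiftMap_iter_bijective m).injective h1 h2
      (Set.nonempty_iff_ne_empty.2 hcon))
  have hcover : (⋃ W ∈ hfin.toFinset, W) = X := by
    apply Set.Subset.antisymm
    · apply Set.iUnion₂_subset
      intro W hW
      rw [Set.Finite.mem_toFinset] at hW
      exact hW.1
    · intro x hx
      rw [cover_by_components m hm X hXinv hmin hY] at hx
      obtain ⟨s, ⟨i, rfl⟩, hxs⟩ := hx
      exact Set.mem_biUnion (hfin.mem_toFinset.2 (minComponent_image m X hXinv hY (i : ℕ))) hxs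
  have hμeq : ∀ W ∈ hfin.toFinset, μ W = μ Xj := by
    intro W hW
    rw [Set.Finite.mem_toFinset] at hW
    obtain ⟨i, rfl⟩ := classify_components m hm X hXinv hmin hY hW
    obtain ⟨i', rfl⟩ := classify_components m hm X hXinv hmin hY hXj
    rw [measure_image_shift_iter hinv _ hY.2.2.1.measurableSet,
      measure_image_shift_iter hinv _ hY.2.2.1.measurableSet]
  have hsum : μ X = ∑ W ∈ hfin.toFinset, μ W := by
    rw [← hcover]
    exact measure_biUnion_finset hdisj (fun W hW => hmeas W (hfin.mem_toFinset.1 hW))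
  rw [Finset.sum_congr rfl hμeq, Finset.sum_const,
    ← Set.ncard_eq_toFinset_card 𝒞 hfin] at hsum
  rw [← hsupp, hsum, nsmul_eq_mul]

end MeasComp

section Clopen
variable {A : Type*} [Fintype A] [TopologicalSpace A] [DiscreteTopology A]

lemma component_locally_determined (m : ℕ) (hm : 0 < m) (X : Set (ℤ → A))
    (hXne : X.Nonempty) (hXcl : IsClosed X)
    (hXinv : shiftMap '' X = X) (hmin : MinimalOn shiftMap X)
    {Xj : Set (ℤ → A)} (hXj : MinComponent (shiftMap^[m]) X Xj) :
    ∃ N : ℕ, ∀ x ∈ Xj, ∀ z ∈ X, (∀ i : ℤ, i.natAbs ≤ N → z i = x i) → z ∈ Xj := by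
  classical
  obtain ⟨Y, hY⟩ := exists_minComponent m X hXne hXcl (iter_image_X X hXinv m)
  set C : ℕ → Set (ℤ → A) := fun i => (shiftMap^[i]) '' Y with hC
  have hcomp : ∀ i : ℕ, MinComponent (shiftMap^[m]) X (C i) :=
    fun i => minComponent_image m X hXinv hY i
  set K : Set (ℤ → A) := ⋃ i : Fin m, (if C (i : ℕ) = Xj then (∅ : Set (ℤ → A)) else C (i : ℕ))
    with hK
  have hKcl : IsClosed K := by
    apply isClosed_iUnion_of_finite
    intro i
    split
    · exact isClosed_empty
    · exact (hcomp (i : ℕ)).2.2.1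
  set V : Set (ℤ → A) := Kᶜ with hV
  have hVopen : IsOpen V := hKcl.isOpen_compl
  have hXjV : Xj ⊆ V := by
    intro x hx
    simp only [hV, Set.mem_compl_iff, hK, Set.mem_iUnion]
    rintro ⟨i, hi⟩
    by_cases h : C (i : ℕ) = Xj
    · rw [if_pos h] at hi; exact hi
    · rw [if_neg h] at hi
      exact h (minComponent_inter_eq (shiftMap_iter_bijective m).injective
        (hcomp (i : ℕ)) hXj ⟨x, hi, hx⟩)
  have hVX : V ∩ X ⊆ Xj := by
    rintro z ⟨hzV, hzX⟩
    rw [cover_by_components m hm X hXinv hmin hY] at hzX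
    obtain ⟨s, ⟨i, rfl⟩, hzs⟩ := hzX
    by_cases h : C (i : ℕ) = Xj
    · exact h ▸ hzs
    · exfalso
      apply hzV
      rw [hK, Set.mem_iUnion]
      exact ⟨i, by rw [if_neg h]; exact hzs⟩
  -- for each x in V, find a radius
  have hrad : ∀ x ∈ V, ∃ N : ℕ, {z : ℤ → A | ∀ i : ℤ, i.natAbs ≤ N → z i = x i} ⊆ V := by
    intro x hx
    obtain ⟨I, u, hIu, hpi⟩ := (isOpen_pi_iff.1 hVopen) x hx
    refine ⟨I.sup Int.natAbs, fun z hz => hpi ?_⟩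
    intro a ha
    have : z a = x a := hz a (Finset.le_sup ha)
    rw [this]
    exact (hIu a ha).2
  choose! N hN using hrad
  -- open cover of the compact set Xj
  have hXjcomp : IsCompact Xj := hXj.2.2.1.isCompact
  have hcov : Xj ⊆ ⋃ x : Xj, {z : ℤ → A | ∀ i : ℤ, i.natAbs ≤ N x → z i = (x : ℤ → A) i} := by
    intro x hx
    exact Set.mem_iUnion.2 ⟨⟨x, hx⟩, fun i _ => rfl⟩
  have hopen : ∀ x : Xj, IsOpen {z : ℤ → A | ∀ i : ℤ, i.natAbs ≤ N x → z i = (x : ℤ → A) i} := by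
    intro x
    have : {z : ℤ → A | ∀ i : ℤ, i.natAbs ≤ N x → z i = (x : ℤ → A) i}
        = ((Finset.Icc (-(N (x : ℤ → A) : ℤ)) ((N (x : ℤ → A) : ℤ)) : Finset ℤ) : Set ℤ).pi
          (fun i => ({(x : ℤ → A) i} : Set A)) := by
      ext z
      simp only [Set.mem_setOf_eq, Set.mem_pi, Finset.coe_Icc, Set.mem_Icc,
        Set.mem_singleton_iff, Finset.mem_coe, Finset.mem_Icc]
      constructor
      · intro h i hi
        exact h i (by omega)
      · intro h i hi
        exact h i (by omega)
    rw [this]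
    exact isOpen_set_pi (Finset.finite_toSet _) (fun a _ => isOpen_discrete _)
  obtain ⟨t, ht⟩ := hXjcomp.elim_finite_subcover _ hopen hcov
  refine ⟨t.sup (fun x0 => N (x0 : ℤ → A)), fun x hx z hzX hagree => ?_⟩
  obtain ⟨x0, hx0t, hxs⟩ := Set.mem_iUnion₂.1 (ht hx)
  apply hVX
  refine ⟨?_, hzX⟩
  have hzx0 : ∀ i : ℤ, i.natAbs ≤ N (x0 : ℤ → A) → z i = (x0 : ℤ → A) i := by
    intro i hi
    have h1 : z i = x i := hagree i (hi.trans (Finset.le_sup (f := fun x0 : Xj => N (x0 : ℤ → A)) hx0t))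
    have h2 : x i = (x0 : ℤ → A) i := hxs i hi
    rw [h1, h2]
  exact hN (x0 : ℤ → A) (hXjV x0.2) hzx0

end Clopen

section Window

lemma image_iterate_inv {α : Type*} {g : α → α} {W : Set α} (h : g '' W = W) (n : ℕ) :
    (g^[n]) '' W = W := by
  induction n with
  | zero => simp
  | succ n ih => rw [Function.iterate_succ', Set.image_comp, ih, h]

lemma mem_of_apply_mem {α : Type*} {g : α → α} (hinj : Function.Injective g) {W : Set α}
    (h : g '' W = W) {z : α} (hz : g z ∈ W) : z ∈ W := by
  rw [← h] at hz
  obtain ⟨w, hw, hwz⟩ := hz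
  rwa [← hinj hwz]

variable {A : Type*} [Fintype A] [TopologicalSpace A] [DiscreteTopology A]

lemma component_window (m : ℕ) (hm : 0 < m) (X : Set (ℤ → A))
    (hXne : X.Nonempty) (hXcl : IsClosed X)
    (hXinv : shiftMap '' X = X) (hmin : MinimalOn shiftMap X)
    {Xj : Set (ℤ → A)} (hXj : MinComponent (shiftMap^[m]) X Xj) :
    ∃ K : ℕ, ∀ k, K ≤ k → ∀ x ∈ Xj, ∀ z ∈ X,
      (∀ p : ℕ, p < m * k → z (p : ℤ) = x (p : ℤ)) → z ∈ Xj := by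
  obtain ⟨N, hN⟩ := component_locally_determined m hm X hXne hXcl hXinv hmin hXj
  refine ⟨N * m + N + 1, fun k hk x hx z hz hagree => ?_⟩
  have hmk : N * m + N < m * k := by
    calc N * m + N < N * m + N + 1 := Nat.lt_succ_self _
    _ ≤ k := hk
    _ ≤ m * k := Nat.le_mul_of_pos_left k hm
  have hXjN : ((shiftMap^[m])^[N]) '' Xj = Xj := image_iterate_inv hXj.2.2.2.1 N
  have hXN : ∀ j : ℕ, (shiftMap^[j]) '' X = X := iter_image_X X hXinv
  set x' := (shiftMap^[N * m]) x with hx'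
  set z' := (shiftMap^[N * m]) z with hz'
  have hiter : (shiftMap^[N * m] : (ℤ → A) → ℤ → A) = (shiftMap^[m])^[N] := by
    rw [← Function.iterate_mul, Nat.mul_comm]
  have hx'Xj : x' ∈ Xj := by
    rw [hx', hiter, ← hXjN]
    exact ⟨x, hx, rfl⟩
  have hz'X : z' ∈ X := by
    rw [hz', ← hXN (N * m)]
    exact ⟨z, hz, rfl⟩
  have hz'Xj : z' ∈ Xj := by
    apply hN x' hx'Xj z' hz'X
    intro i hi
    rw [hx', hz', shiftMap_iterate, shiftMap_iterate]
    have hNm : N ≤ N * m := Nat.le_mul_of_pos_right N hm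
    have hex : ∃ p : ℕ, (p : ℤ) = i + (N * m : ℕ) ∧ p < m * k := by
      refine ⟨(i + ((N * m : ℕ) : ℤ)).toNat, by omega, by omega⟩
    obtain ⟨p, hp, hpk⟩ := hex
    rw [← hp]
    exact hagree p hpk
  rw [hiter] at hz'
  exact mem_of_apply_mem (Function.Injective.iterate (shiftMap_iter_bijective m).injective N)
    hXjN (by rw [← hz']; exact hz'Xj)

end Window

section Limsup

lemma limsup_pos_aux (f g : ℕ → ℝ≥0∞) (hf : Antitone f) (m : ℕ) (hm : 0 < m)
    (hpos : 0 < Filter.limsup (fun n : ℕ => (n : ℝ≥0∞) * f n) Filter.atTop)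
    (hg : ∀ᶠ k in Filter.atTop, f (m * k) ≤ g k) :
    0 < Filter.limsup (fun k : ℕ => (k : ℝ≥0∞) * g k) Filter.atTop := by
  set h : ℕ → ℝ≥0∞ := fun k => (k : ℝ≥0∞) * f (m * k) with hh
  have hdiv : Filter.Tendsto (fun n : ℕ => n / m) Filter.atTop Filter.atTop := by
    apply Filter.tendsto_atTop_atTop.2
    intro b
    exact ⟨b * m, fun n hn => (Nat.le_div_iff_mul_le hm).2 hn⟩
  have hcomp : Filter.limsup (fun n : ℕ => h (n / m)) Filter.atTop ≤
      Filter.limsup h Filter.atTop := by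
    rw [show (fun n : ℕ => h (n / m)) = h ∘ (fun n : ℕ => n / m) from rfl, limsup_comp]
    exact limsup_le_limsup_of_le (Filter.map_le_iff_le_comap.2 hdiv.le_comap)
  have hkey : Filter.limsup (fun n : ℕ => (n : ℝ≥0∞) * f n) Filter.atTop ≤
      (2 * m : ℝ≥0∞) * Filter.limsup h Filter.atTop := by
    have hev : ∀ᶠ n : ℕ in Filter.atTop,
        (n : ℝ≥0∞) * f n ≤ (2 * m : ℝ≥0∞) * h (n / m) := by
      filter_upwards [Filter.eventually_ge_atTop m] with n hn
      have h1 : m * (n / m) ≤ n := Nat.mul_div_le n m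
      have h2 : n ≤ 2 * m * (n / m) := by
        have hq1 : 1 ≤ n / m := (Nat.one_le_div_iff hm).2 hn
        have hmod := Nat.div_add_mod n m
        have hlt : n % m < m := Nat.mod_lt n hm
        have hmm : m * 1 ≤ m * (n / m) := Nat.mul_le_mul_left m hq1
        calc n = m * (n / m) + n % m := (Nat.div_add_mod n m).symm
          _ ≤ m * (n / m) + m := by omega
          _ ≤ m * (n / m) + m * (n / m) := by omega
          _ = 2 * m * (n / m) := by ring
      calc (n : ℝ≥0∞) * f n ≤ (2 * m * (n / m) : ℕ) * f (m * (n / m)) := by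
            apply mul_le_mul' (by exact_mod_cast Nat.cast_le.2 h2) (hf h1)
        _ = (2 * m : ℝ≥0∞) * h (n / m) := by
            push_cast
            rw [hh]
            ring
    calc Filter.limsup (fun n : ℕ => (n : ℝ≥0∞) * f n) Filter.atTop
        ≤ Filter.limsup (fun n : ℕ => (2 * m : ℝ≥0∞) * h (n / m)) Filter.atTop :=
          limsup_le_limsup hev
      _ ≤ (2 * m : ℝ≥0∞) * Filter.limsup (fun n : ℕ => h (n / m)) Filter.atTop := by
          rw [ENNReal.limsup_const_mul_of_ne_top (ENNReal.mul_ne_top ENNReal.ofNat_ne_top (ENNReal.natCast_ne_top m))]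
      _ ≤ (2 * m : ℝ≥0∞) * Filter.limsup h Filter.atTop := by
          exact mul_le_mul_right hcomp _
  have hpos' : 0 < Filter.limsup h Filter.atTop := by
    by_contra hcon
    push_neg at hcon
    have : Filter.limsup h Filter.atTop = 0 := le_antisymm hcon (zero_le)
    rw [this, mul_zero] at hkey
    exact absurd (le_antisymm hkey (zero_le)) hpos.ne'
  refine hpos'.trans_le (limsup_le_limsup ?_)
  filter_upwards [hg] with k hk
  exact mul_le_mul_right hk _

end Limsup


section Cyl
variable {A : Type*} [Fintype A] [TopologicalSpace A] [DiscreteTopology A]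

lemma cylSet_closed (n : ℕ) (u : Fin n → A) : IsClosed (cylSet n u) := by
  have : cylSet n u = ⋂ i : Fin n, (fun x : ℤ → A => x ((i : ℕ) : ℤ)) ⁻¹' {u i} := by
    ext x; simp [cylSet]
  rw [this]
  exact isClosed_iInter fun i => (isClosed_discrete _).preimage (continuous_apply _)

lemma cylSet_measurableSet [MeasurableSpace A] [BorelSpace A] (n : ℕ) (u : Fin n → A) :
    MeasurableSet (cylSet n u) := (cylSet_closed n u).measurableSet

end Cyl

section MuLow
variable {A : Type*} [MeasurableSpace A]

lemma muLow_le (μ : Measure (ℤ → A)) (X : Set (ℤ → A)) {n : ℕ} {u : Fin n → A}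
    (hu : u ∈ wordsIn X n) : muLow μ X n ≤ μ (cylSet n u) :=
  sInf_le ⟨u, hu, rfl⟩

lemma muLow_antitone (μ : Measure (ℤ → A)) (X : Set (ℤ → A)) : Antitone (muLow μ X) := by
  apply antitone_nat_of_succ_le
  intro n
  apply sInf_le_sInf_of_isCoinitialFor
  rintro a ⟨u, hu, rfl⟩
  obtain ⟨x, hxX, t, hxt⟩ := hu
  set u' : Fin (n + 1) → A := fun i => x (t + (i : ℕ)) with hu'
  refine ⟨μ (cylSet (n + 1) u'), ⟨u', ⟨x, hxX, t, fun i => rfl⟩, rfl⟩, ?_⟩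
  apply measure_mono
  intro z hz
  intro i
  have h1 := hz ⟨(i : ℕ), Nat.lt_succ_of_lt i.2⟩
  have h2 : u' ⟨(i : ℕ), Nat.lt_succ_of_lt i.2⟩ = u i := by
    rw [hu']
    exact hxt i
  rw [← h2]
  exact h1

end MuLow

section Block
variable {A : Type*}

def flatWord {m : ℕ} (hm : 0 < m) (k : ℕ) (u : Fin k → Fin m → A) : Fin (m * k) → A :=
  fun p => u ⟨p.1 / m, Nat.div_lt_of_lt_mul p.2⟩ ⟨p.1 % m, Nat.mod_lt _ hm⟩

lemma blockMap_apply (m : ℕ) (x : ℤ → A) (j : ℤ) (i : Fin m) :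
    blockMap m x j i = x (j * (m : ℕ) + (i : ℕ)) := rfl

lemma blockMap_injective {m : ℕ} (hm : 0 < m) : Function.Injective (blockMap (A := A) m) := by
  intro x y h
  funext t
  have hj := congrFun (congrFun h (t / (m : ℤ)))
    ⟨(t % (m : ℤ)).toNat, by
      have h1 : 0 ≤ t % (m : ℤ) := Int.emod_nonneg t (by exact_mod_cast hm.ne')
      have h2 : t % (m : ℤ) < m := Int.emod_lt_of_pos t (by exact_mod_cast hm)
      omega⟩
  simp only [blockMap_apply] at hj
  have he : t / (m : ℤ) * (m : ℕ) + ((t % (m : ℤ)).toNat : ℤ) = t := by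
    have h1 : 0 ≤ t % (m : ℤ) := Int.emod_nonneg t (by exact_mod_cast hm.ne')
    have h3 := Int.mul_ediv_add_emod t (m : ℤ)
    have h4 : t / (m : ℤ) * ((m : ℕ) : ℤ) = (m : ℤ) * (t / (m : ℤ)) := by
      push_cast
      ring
    omega
  rwa [he] at hj

lemma shift_blockMap_comm (m : ℕ) (x : ℤ → A) :
    shiftMap (blockMap m x) = blockMap m ((shiftMap^[m]) x) := by
  funext j i
  show blockMap m x (j + 1) i = (shiftMap^[m]) x (j * (m : ℕ) + (i : ℕ))
  rw [shiftMap_iterate, blockMap_apply]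
  ring_nf

lemma blockMap_preimage_cyl {m : ℕ} (hm : 0 < m) (k : ℕ) (u : Fin k → Fin m → A) :
    blockMap m ⁻¹' cylSet k u = cylSet (m * k) (flatWord hm k u) := by
  ext x
  constructor
  · intro hx p
    have hj := congrFun (hx ⟨p.1 / m, Nat.div_lt_of_lt_mul p.2⟩) ⟨p.1 % m, Nat.mod_lt _ hm⟩
    simp only [blockMap_apply] at hj
    have hnat : p.1 / m * m + p.1 % m = p.1 := Nat.div_add_mod' p.1 m
    have he : ((p.1 / m : ℕ) : ℤ) * ((m : ℕ) : ℤ) + ((p.1 % m : ℕ) : ℤ) = ((p.1 : ℕ) : ℤ) := by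
      exact_mod_cast congrArg (fun z : ℕ => (z : ℤ)) hnat
    rw [he] at hj
    exact hj
  · intro hx j
    funext i
    have hp : (j : ℕ) * m + (i : ℕ) < m * k := by
      calc (j : ℕ) * m + (i : ℕ) < (j : ℕ) * m + m := by omega
        _ = ((j : ℕ) + 1) * m := by ring
        _ ≤ k * m := Nat.mul_le_mul_right m j.2
        _ = m * k := Nat.mul_comm k m
    have h1 := hx ⟨(j : ℕ) * m + (i : ℕ), hp⟩
    have hdiv : ((j : ℕ) * m + (i : ℕ)) / m = (j : ℕ) := by
      rw [Nat.add_comm, Nat.add_mul_div_right _ _ hm, Nat.div_eq_of_lt i.2, Nat.zero_add]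
    have hmod : ((j : ℕ) * m + (i : ℕ)) % m = (i : ℕ) := by
      rw [Nat.add_comm, Nat.add_mul_mod_self_right, Nat.mod_eq_of_lt i.2]
    rw [blockMap_apply]
    simp only [flatWord] at h1
    rw [show ((((j : ℕ) * m + (i : ℕ) : ℕ)) : ℤ) = j * ((m : ℕ) : ℤ) + ((i : ℕ) : ℤ) from by
      push_cast; ring] at h1
    convert h1 using 2
    · exact Fin.ext hdiv.symm
    · exact Fin.ext hmod.symm

end Block


section Shift2
variable {A : Type*}

lemma exists_shift_mem {m : ℕ} {Xj : Set (ℤ → A)} (hXjinv : (shiftMap^[m]) '' Xj = Xj)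
    {x0 : ℤ → A} (hx0 : x0 ∈ Xj) (t : ℤ) :
    ∃ x' ∈ Xj, ∀ s : ℤ, x' s = x0 (s + t * m) := by
  rcases le_or_gt 0 t with ht | ht
  · refine ⟨(shiftMap^[t.toNat * m]) x0, ?_, ?_⟩
    · have hit : (shiftMap^[t.toNat * m] : (ℤ → A) → ℤ → A) = (shiftMap^[m])^[t.toNat] := by
        rw [← Function.iterate_mul, Nat.mul_comm]
      rw [hit, ← image_iterate_inv hXjinv t.toNat]
      exact ⟨x0, hx0, rfl⟩
    · intro s
      rw [shiftMap_iterate]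
      congr 1
      have h7 : ((t.toNat : ℤ)) = t := Int.toNat_of_nonneg ht
      push_cast [h7]
      ring
  · obtain ⟨w, hw, hwe⟩ : x0 ∈ ((shiftMap^[m])^[(-t).toNat]) '' Xj := by
      rw [image_iterate_inv hXjinv]
      exact hx0
    refine ⟨w, hw, fun s => ?_⟩
    have h6 : x0 = (shiftMap^[(-t).toNat * m]) w := by
      rw [show (shiftMap^[(-t).toNat * m] : (ℤ → A) → ℤ → A) = (shiftMap^[m])^[(-t).toNat] from by
        rw [← Function.iterate_mul, Nat.mul_comm], hwe]
    rw [h6, shiftMap_iterate]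
    congr 1
    have h7 : (((-t).toNat : ℤ)) = -t := Int.toNat_of_nonneg (by omega)
    push_cast [h7]
    ring

lemma flatWord_witness {m : ℕ} (hm : 0 < m) {Xj : Set (ℤ → A)}
    (hXjinv : (shiftMap^[m]) '' Xj = Xj) (k : ℕ) {u : Fin k → Fin m → A}
    (hu : u ∈ wordsIn (blockMap m '' Xj) k) :
    ∃ x' ∈ Xj, x' ∈ cylSet (m * k) (flatWord hm k u) := by
  obtain ⟨y, ⟨x0, hx0, rfl⟩, t, hyt⟩ := hu
  obtain ⟨x', hx', hshift⟩ := exists_shift_mem hXjinv hx0 t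
  refine ⟨x', hx', fun p => ?_⟩
  rw [hshift]
  have hj := congrFun (hyt ⟨p.1 / m, Nat.div_lt_of_lt_mul p.2⟩) ⟨p.1 % m, Nat.mod_lt _ hm⟩
  rw [blockMap_apply] at hj
  have hnat : p.1 / m * m + p.1 % m = p.1 := Nat.div_add_mod' p.1 m
  have hc : ((p.1 / m : ℕ) : ℤ) * ((m : ℕ) : ℤ) + ((p.1 % m : ℕ) : ℤ) = ((p.1 : ℕ) : ℤ) := by
    exact_mod_cast congrArg (fun z : ℕ => (z : ℤ)) hnat
  rw [show ((p : ℕ) : ℤ) + t * (m : ℕ)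
      = (t + ((p.1 / m : ℕ) : ℤ)) * ((m : ℕ) : ℤ) + ((p.1 % m : ℕ) : ℤ) from by
    linear_combination -hc]
  exact hj

end Shift2

section RestrictInv
variable {A : Type*} [Fintype A] [TopologicalSpace A] [DiscreteTopology A]
  [MeasurableSpace A] [BorelSpace A]

lemma map_restrict_eq {μ : Measure (ℤ → A)} (hinv : Measure.map shiftMap μ = μ) (m : ℕ)
    {Xj : Set (ℤ → A)} (hXjm : MeasurableSet Xj) (hXjinv : (shiftMap^[m]) '' Xj = Xj) :
    Measure.map (shiftMap^[m]) (μ.restrict Xj) = μ.restrict Xj := by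
  ext s hs
  rw [Measure.map_apply (shiftMap_iter_continuous m).measurable hs,
    Measure.restrict_apply hs,
    Measure.restrict_apply ((shiftMap_iter_continuous m).measurable hs)]
  have hpre : (shiftMap^[m]) ⁻¹' Xj = Xj := by
    conv_lhs => rw [← hXjinv]
    rw [Set.preimage_image_eq _ (shiftMap_iter_bijective m).injective]
  rw [show (shiftMap^[m]) ⁻¹' s ∩ Xj = (shiftMap^[m]) ⁻¹' (s ∩ Xj) from by
    rw [Set.preimage_inter, hpre]]
  rw [← Measure.map_apply (shiftMap_iter_continuous m).measurable (hs.inter hXjm),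
    map_iterate_eq hinv m]

end RestrictInv

/-- Let `X` be a Boshernitzan subshift with unique invariant measure
`μ`, let `q` be the number of `S^m`-minimal components, and let `X_j` be one of them.
Then `μ(X_j) = 1/q`, the measure `μ_j = q·μ|_{X_j}` is an `S^m`-invariant probability
measure, `limsup_k k·min{μ_j[u] : u ∈ ℒ_{mk}(X), [u] ⊆ X_j} > 0`, and the `m`-block
recoding of `X_j` is a Boshernitzan subshift. -/
theorem minimal_component_satisfies_boshernitzan
    {A : Type*} [Fintype A] [TopologicalSpace A] [DiscreteTopology A]
    [MeasurableSpace A] [BorelSpace A]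
    (X : Set (ℤ → A)) (hX : IsBoshernitzan X)
    (μ : Measure (ℤ → A)) (hprob : IsProbabilityMeasure μ) (hsupp : μ X = 1)
    (hinv : Measure.map shiftMap μ = μ)
    (huniq : ∀ ν : Measure (ℤ → A), IsProbabilityMeasure ν → ν X = 1 →
      Measure.map shiftMap ν = ν → ν = μ)
    (m : ℕ) (hm : 0 < m)
    (q : ℕ) (hq : q = numMinComponents (shiftMap^[m]) X)
    (Xj : Set (ℤ → A)) (hXj : MinComponent (shiftMap^[m]) X Xj) :
    μ Xj = (q : ℝ≥0∞)⁻¹ ∧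
      IsProbabilityMeasure ((q : ℝ≥0∞) • μ.restrict Xj) ∧
      Measure.map (shiftMap^[m]) ((q : ℝ≥0∞) • μ.restrict Xj)
        = (q : ℝ≥0∞) • μ.restrict Xj ∧
      0 < Filter.limsup
        (fun k : ℕ => (k : ℝ≥0∞) *
          sInf ((fun u => ((q : ℝ≥0∞) • μ.restrict Xj) (cylSet (m * k) u)) ''
            {u : Fin (m * k) → A | u ∈ wordsIn X (m * k) ∧ cylSet (m * k) u ∩ X ⊆ Xj}))
        Filter.atTop ∧
      IsBoshernitzan (blockMap m '' Xj) := by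
  classical
  obtain ⟨⟨hXne, hXcl, hXS⟩, hmin, μ', hμ'prob, hμ'X, hμ'inv, hμ'lim⟩ := hX
  have hμ'eq : μ' = μ := huniq μ' hμ'prob hμ'X hμ'inv
  rw [hμ'eq] at hμ'lim
  have hq1 : (q : ℝ≥0∞) * μ Xj = 1 := by
    rw [hq]
    exact measure_component_eq m hm X hXne hXcl hXS hmin μ hprob hsupp hinv hXj
  have hq0 : (q : ℝ≥0∞) ≠ 0 := by
    intro h
    rw [h, zero_mul] at hq1
    exact zero_ne_one hq1
  have hqt : (q : ℝ≥0∞) ≠ ⊤ := ENNReal.natCast_ne_top q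
  have hq0' : q ≠ 0 := by
    intro h
    exact hq0 (by rw [h]; simp)
  have hq1le : (1 : ℝ≥0∞) ≤ (q : ℝ≥0∞) := by
    exact_mod_cast Nat.one_le_iff_ne_zero.2 hq0'
  have hμXj : μ Xj = (q : ℝ≥0∞)⁻¹ := by
    calc μ Xj = ((q : ℝ≥0∞)⁻¹ * q) * μ Xj := by
          rw [ENNReal.inv_mul_cancel hq0 hqt, one_mul]
      _ = (q : ℝ≥0∞)⁻¹ * ((q : ℝ≥0∞) * μ Xj) := by ring
      _ = (q : ℝ≥0∞)⁻¹ := by rw [hq1, mul_one]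
  have hXjmeas : MeasurableSet Xj := hXj.2.2.1.measurableSet
  have hXmeas : MeasurableSet X := hXcl.measurableSet
  have hXc0 : μ Xᶜ = 0 := by
    have h := measure_compl hXmeas (measure_ne_top μ X)
    rw [hsupp, measure_univ] at h
    simpa using h
  have hinterX : ∀ s : Set (ℤ → A), μ (s ∩ X) = μ s := by
    intro s
    apply le_antisymm (measure_mono Set.inter_subset_left)
    have hsub : s ⊆ (s ∩ X) ∪ Xᶜ := by
      intro z hz
      by_cases h : z ∈ X
      · exact Or.inl ⟨hz, h⟩
      · exact Or.inr h
    calc μ s ≤ μ ((s ∩ X) ∪ Xᶜ) := measure_mono hsub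
      _ ≤ μ (s ∩ X) + μ Xᶜ := measure_union_le _ _
      _ = μ (s ∩ X) := by rw [hXc0, add_zero]
  set μj := (q : ℝ≥0∞) • μ.restrict Xj with hμj
  have hμjcyl : ∀ (n : ℕ) (u : Fin n → A),
      μj (cylSet n u) = (q : ℝ≥0∞) * μ (cylSet n u ∩ Xj) := by
    intro n u
    rw [hμj, Measure.smul_apply, smul_eq_mul, Measure.restrict_apply (cylSet_measurableSet n u)]
  have hμjprob : IsProbabilityMeasure μj := by
    constructor
    rw [hμj, Measure.smul_apply, smul_eq_mul, Measure.restrict_apply_univ, hq1]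
  have hμjinv : Measure.map (shiftMap^[m]) μj = μj := by
    rw [hμj, Measure.map_smul, map_restrict_eq hinv m hXjmeas hXj.2.2.2.1]
  -- part 4
  have hbound4 : ∀ k : ℕ, muLow μ X (m * k) ≤
      sInf ((fun u => μj (cylSet (m * k) u)) ''
        {u : Fin (m * k) → A | u ∈ wordsIn X (m * k) ∧ cylSet (m * k) u ∩ X ⊆ Xj}) := by
    intro k
    apply le_sInf
    rintro b ⟨u, ⟨huw, hucyl⟩, rfl⟩
    calc muLow μ X (m * k) ≤ μ (cylSet (m * k) u) := muLow_le μ X huw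
      _ = μ (cylSet (m * k) u ∩ X) := (hinterX _).symm
      _ ≤ μ (cylSet (m * k) u ∩ Xj) := measure_mono (fun z hz => ⟨hz.1, hucyl hz⟩)
      _ ≤ (q : ℝ≥0∞) * μ (cylSet (m * k) u ∩ Xj) := le_mul_of_one_le_left (zero_le) hq1le
      _ = μj (cylSet (m * k) u) := (hμjcyl _ u).symm
  have hpart4 : 0 < Filter.limsup
      (fun k : ℕ => (k : ℝ≥0∞) *
        sInf ((fun u => μj (cylSet (m * k) u)) ''
          {u : Fin (m * k) → A | u ∈ wordsIn X (m * k) ∧ cylSet (m * k) u ∩ X ⊆ Xj}))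
      Filter.atTop :=
    limsup_pos_aux (muLow μ X) _ (muLow_antitone μ X) m hm hμ'lim
      (Filter.Eventually.of_forall hbound4)
  -- part 5
  have hBc : Continuous (blockMap m : (ℤ → A) → ℤ → (Fin m → A)) :=
    continuous_pi fun j => continuous_pi fun i => continuous_apply _
  have hBmeas : Measurable (blockMap m : (ℤ → A) → ℤ → (Fin m → A)) := hBc.measurable
  set Y := blockMap m '' Xj with hY
  have hYne : Y.Nonempty := hXj.2.1.image _
  have hYcl : IsClosed Y := (hXj.2.2.1.isCompact.image hBc).isClosed
  have hYshift : shiftMap '' Y = Y := by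
    rw [hY, ← Set.image_comp,
      show (shiftMap ∘ blockMap m : (ℤ → A) → ℤ → (Fin m → A))
        = blockMap m ∘ (shiftMap^[m]) from funext (shift_blockMap_comm m),
      Set.image_comp, hXj.2.2.2.1]
  have hYmin : MinimalOn shiftMap Y := by
    intro Z hZY hZcl hZinv
    rcases Set.eq_empty_or_nonempty Z with h | hZne
    · exact Or.inl h
    right
    set W := Xj ∩ blockMap m ⁻¹' Z with hW
    have hWX : W ⊆ Xj := Set.inter_subset_left
    have hWne : W.Nonempty := by
      obtain ⟨z, hz⟩ := hZne
      obtain ⟨x, hx, rfl⟩ := hZY hz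
      exact ⟨x, hx, hz⟩
    have hWcl : IsClosed W := hXj.2.2.1.inter (hZcl.preimage hBc)
    have hWinv : (shiftMap^[m]) '' W = W := by
      apply Set.Subset.antisymm
      · rintro _ ⟨w, ⟨hw1, hw2⟩, rfl⟩
        refine ⟨?_, ?_⟩
        · rw [← hXj.2.2.2.1]
          exact ⟨w, hw1, rfl⟩
        · show blockMap m ((shiftMap^[m]) w) ∈ Z
          rw [← shift_blockMap_comm, ← hZinv]
          exact ⟨_, hw2, rfl⟩
      · rintro x ⟨hx1, hx2⟩
        have hx1' := hx1
        rw [← hXj.2.2.2.1] at hx1'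
        obtain ⟨w, hw, rfl⟩ := hx1'
        refine ⟨w, ⟨hw, ?_⟩, rfl⟩
        show blockMap m w ∈ Z
        have hx2' : blockMap m ((shiftMap^[m]) w) ∈ Z := hx2
        rw [← shift_blockMap_comm, ← hZinv] at hx2'
        obtain ⟨z, hz, hze⟩ := hx2'
        rwa [← shiftMap_bijective.injective hze]
    have hWXj := hXj.2.2.2.2 W hWX hWne hWcl hWinv
    apply Set.Subset.antisymm hZY
    rintro _ ⟨x, hx, rfl⟩
    have hxW : x ∈ W := hWXj ▸ hx
    exact hxW.2
  set ν := Measure.map (blockMap m) μj with hν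
  have hνprob : IsProbabilityMeasure ν := Measure.isProbabilityMeasure_map hBmeas.aemeasurable
  have hνY : ν Y = 1 := by
    apply le_antisymm prob_le_one
    have h1 : Xj ⊆ blockMap m ⁻¹' Y := fun x hx => ⟨x, hx, rfl⟩
    calc (1 : ℝ≥0∞) = μj Xj := by
          rw [hμj, Measure.smul_apply, smul_eq_mul, Measure.restrict_apply hXjmeas,
            Set.inter_self, hq1]
      _ ≤ μj (blockMap m ⁻¹' Y) := measure_mono h1
      _ = ν Y := (Measure.map_apply hBmeas hYcl.measurableSet).symm
  have hνinv : Measure.map shiftMap ν = ν := by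
    rw [hν, Measure.map_map shiftMap_measurable hBmeas,
      show (shiftMap ∘ blockMap m : (ℤ → A) → ℤ → (Fin m → A))
        = blockMap m ∘ (shiftMap^[m]) from funext (shift_blockMap_comm m),
      ← Measure.map_map hBmeas (shiftMap_iter_continuous m).measurable, hμjinv]
  obtain ⟨K, hK⟩ := component_window m hm X hXne hXcl hXS hmin hXj
  have hev5 : ∀ᶠ k in Filter.atTop, muLow μ X (m * k) ≤ muLow ν Y k := by
    filter_upwards [Filter.eventually_ge_atTop K] with k hk
    apply le_sInf
    rintro b ⟨u, hu, rfl⟩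
    obtain ⟨x', hx'Xj, hx'cyl⟩ := flatWord_witness hm hXj.2.2.2.1 k hu
    have hνu : ν (cylSet k u) = μj (cylSet (m * k) (flatWord hm k u)) := by
      rw [hν, Measure.map_apply hBmeas (cylSet_measurableSet k u),
        blockMap_preimage_cyl hm k u]
    have hw : flatWord hm k u ∈ wordsIn X (m * k) :=
      ⟨x', hXj.1 hx'Xj, 0, fun i => by simpa using hx'cyl i⟩
    have hsub : cylSet (m * k) (flatWord hm k u) ∩ X ⊆ Xj := by
      rintro z ⟨hz1, hz2⟩
      apply hK k hk x' hx'Xj z hz2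
      intro p hp
      rw [hz1 ⟨p, hp⟩, hx'cyl ⟨p, hp⟩]
    calc muLow μ X (m * k) ≤ μ (cylSet (m * k) (flatWord hm k u)) := muLow_le μ X hw
      _ = μ (cylSet (m * k) (flatWord hm k u) ∩ X) := (hinterX _).symm
      _ ≤ μ (cylSet (m * k) (flatWord hm k u) ∩ Xj) :=
          measure_mono (fun z hz => ⟨hz.1, hsub hz⟩)
      _ ≤ (q : ℝ≥0∞) * μ (cylSet (m * k) (flatWord hm k u) ∩ Xj) :=
          le_mul_of_one_le_left (zero_le) hq1le
      _ = μj (cylSet (m * k) (flatWord hm k u)) := (hμjcyl _ _).symm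
      _ = ν (cylSet k u) := hνu.symm
  have hpart5lim : 0 < Filter.limsup (fun k : ℕ => (k : ℝ≥0∞) * muLow ν Y k) Filter.atTop :=
    limsup_pos_aux (muLow μ X) _ (muLow_antitone μ X) m hm hμ'lim hev5
  exact ⟨hμXj, hμjprob, hμjinv, hpart4,
    ⟨hYne, hYcl, hYshift⟩, hYmin, ν, hνprob, hνY, hνinv, hpart5lim⟩
end

section
/- Define the Chebyshev-type polynomials S_0(x) = 0, S_1(x) = 1, S_{n+1}(x) = x·S_n(x) − S_{n−1}(x). Let A, B be 2×2 real matrices with determinant 1 such that tr(B·A^{−1}) = 2. Then for every n ≥ 1: tr(B·A^{n−1}) = S_n(tr A)·tr(B) − 2·S_{n−1}(tr A), and tr(A^n) = S_n(tr A)·tr(A) − 2·S_{n−1}(tr A). Consequently |tr(B·A^{n−1}) − tr(A^n)| = |S_n(tr A)|·|tr(B) − tr(A)|. -/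
/-!
Since `A + A⁻¹ = tr A • 1` for `A ∈ SL(2,ℝ)`, the sequence `u k = tr (B A^(k-1))` satisfies the
Chebyshev recurrence `u (k+2) = tr A · u (k+1) − u k`, with initial values `u 0 = tr (B A⁻¹) = 2`
and `u 1 = tr B`. The second identity is the first one for `B = A`, and the third is their difference.
-/

def chebS : ℕ → ℝ → ℝ
  | 0, _ => 0
  | 1, _ => 1
  | (n + 2), x => x * chebS (n + 1) x - chebS n x

theorem chebS_add_two (n : ℕ) (x : ℝ) : chebS (n + 2) x = x * chebS (n + 1) x - chebS n x := rfl

theorem eq_chebS_of_recurrence {u : ℕ → ℝ} {x : ℝ} (hu : ∀ n, u (n + 2) = x * u (n + 1) - u n)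
    (n : ℕ) : u (n + 1) = chebS (n + 1) x * u 1 - chebS n x * u 0 := by
  induction n using Nat.twoStepInduction with
  | zero => simp [chebS]
  | one => rw [hu, chebS_add_two]; simp [chebS]
  | more n ih₁ ih₂ => rw [hu, ih₂, ih₁]; simp only [chebS_add_two]; ring

namespace Matrix

theorem add_adjugate_fin_two {R : Type*} [CommRing R] (A : Matrix (Fin 2) (Fin 2) R) :
    A + A.adjugate = A.trace • 1 := by
  rw [adjugate_fin_two]
  ext i j
  fin_cases i <;> fin_cases j <;> simp [trace_fin_two, add_comm]

theorem add_inv_fin_two_of_det_eq_one {R : Type*} [CommRing R] {A : Matrix (Fin 2) (Fin 2) R}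
    (hA : A.det = 1) : A + A⁻¹ = A.trace • 1 := by
  rw [inv_def, hA, Ring.inverse_one, one_smul, add_adjugate_fin_two]

theorem trace_mul_pow_of_trace_mul_inv_eq_two {A B : Matrix (Fin 2) (Fin 2) ℝ} (hA : A.det = 1)
    (htr : (B * A⁻¹).trace = 2) (n : ℕ) :
    (B * A ^ n).trace = chebS (n + 1) A.trace * B.trace - 2 * chebS n A.trace := by
  have hdet : IsUnit A.det := hA ▸ isUnit_one
  set u : ℕ → ℝ := fun k => (B * A ^ k * A⁻¹).trace
  have hu_succ (k : ℕ) : u (k + 1) = (B * A ^ k).trace := by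
    show (B * A ^ (k + 1) * A⁻¹).trace = _
    rw [pow_succ, ← mul_assoc, mul_nonsing_inv_cancel_right _ _ hdet]
  have hrec (k : ℕ) : u (k + 2) = A.trace * u (k + 1) - u k := by
    have hA' : A = A.trace • 1 - A⁻¹ := eq_sub_of_add_eq (add_inv_fin_two_of_det_eq_one hA)
    calc u (k + 2) = (B * A ^ k * A).trace := by rw [hu_succ, pow_succ, mul_assoc]
      _ = (B * A ^ k * (A.trace • 1 - A⁻¹)).trace := by rw [← hA']
      _ = (A.trace • (B * A ^ k) - B * A ^ k * A⁻¹).trace := by rw [mul_sub, Matrix.mul_smul, mul_one]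
      _ = A.trace * u (k + 1) - u k := by rw [hu_succ, trace_sub, trace_smul, smul_eq_mul]
  have hu₀ : u 0 = 2 := by
    show (B * A ^ 0 * A⁻¹).trace = 2
    rw [pow_zero, mul_one, htr]
  have hu₁ : u 1 = B.trace := by rw [hu_succ, pow_zero, mul_one]
  rw [← hu_succ, eq_chebS_of_recurrence hrec, hu₀, hu₁]
  ring

end Matrix

theorem trace_relations_chebyshev_general
    (A B : Matrix (Fin 2) (Fin 2) ℝ)
    (hA : A.det = 1)
    (htr : (B * A⁻¹).trace = 2) :
    ∀ n : ℕ, 1 ≤ n →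
      (B * A ^ (n - 1)).trace = chebS n A.trace * B.trace - 2 * chebS (n - 1) A.trace ∧
      (A ^ n).trace = chebS n A.trace * A.trace - 2 * chebS (n - 1) A.trace ∧
      |(B * A ^ (n - 1)).trace - (A ^ n).trace| = |chebS n A.trace| * |B.trace - A.trace| := by
  intro n hn
  obtain ⟨m, rfl⟩ := Nat.exists_eq_add_of_le' hn
  have hAA : (A * A⁻¹).trace = 2 := by
    rw [Matrix.mul_nonsing_inv A (hA ▸ isUnit_one), Matrix.trace_one]
    norm_num
  have htrB := Matrix.trace_mul_pow_of_trace_mul_inv_eq_two hA htr m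
  have htrA := Matrix.trace_mul_pow_of_trace_mul_inv_eq_two hA hAA m
  rw [← pow_succ'] at htrA
  rw [Nat.add_sub_cancel]
  refine ⟨htrB, htrA, ?_⟩
  rw [htrB, htrA, ← abs_mul]
  congr 1
  ring

/-- Trace relations. Let `A, B ∈ SL(2,ℝ)` with `tr(B·A⁻¹) = 2`.
Then for all `n ≥ 1`:
`tr(B·A^{n−1}) = S_n(tr A)·tr B − 2·S_{n−1}(tr A)`,
`tr(A^n) = S_n(tr A)·tr A − 2·S_{n−1}(tr A)`, and hence
`|tr(B·A^{n−1}) − tr(A^n)| = |S_n(tr A)|·|tr B − tr A|`. -/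
theorem trace_relations_chebyshev
    (A B : Matrix (Fin 2) (Fin 2) ℝ)
    (hA : A.det = 1) (hB : B.det = 1)
    (htr : (B * A⁻¹).trace = 2) :
    ∀ n : ℕ, 1 ≤ n →
      (B * A ^ (n - 1)).trace = chebS n A.trace * B.trace - 2 * chebS (n - 1) A.trace ∧
      (A ^ n).trace = chebS n A.trace * A.trace - 2 * chebS (n - 1) A.trace ∧
      |(B * A ^ (n - 1)).trace - (A ^ n).trace| = |chebS n A.trace| * |B.trace - A.trace| :=
  trace_relations_chebyshev_general A B hA htr
end

section
/- Let ω : ℤ → ℝ and suppose there exists a strictly increasing sequence (n_m)_{m∈ℕ} of natural numbers such that ω_{j−n_m} = ω_j for all 0 ≤ j ≤ n_m − 1 and all m (i.e., ω restricted to [−n_m, −1] equals ω restricted to [0, n_m−1]). For E ∈ ℝ set x_m(E) = tr( M_E(ω_0 ω_1 ⋯ ω_{n_m−1}) ). If Σ_{m∈ℕ} |x_m(E)|² = ∞, then E is not an eigenvalue of the Schrödinger operator with potential ω: there is no nonzero square-summable ψ : ℤ → ℂ satisfying ψ(n+1) + ψ(n−1) + ω(n)ψ(n) = E·ψ(n)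 for all n ∈ ℤ. -/
/-!
Write `Φ n = (ψ n, ψ (n - 1))` for a solution `ψ` and `A = M_z(ω_0⋯ω_{N-1})`. Then
`A Φ 0 = Φ N`, and since `ω` on `[-N, -1]` repeats `ω` on `[0, N - 1]`, also `A Φ (-N) = Φ 0`.
Cayley–Hamilton, `A² + 1 = (tr A) A`, turns this into `Φ N + Φ (-N) = (tr A) Φ 0`, whence
`|tr A|² ‖Φ 0‖² ≤ 2 (‖Φ N‖² + ‖Φ (-N)‖²)`. Along `N = n_m` the right-hand side is summable
for square-summable `ψ`, and `Φ 0 ≠ 0` unless `ψ = 0`, so `Σ |x_m|² < ∞`.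
-/

/-- A single transfer matrix `M_z(a) = [[z − a, −1],[1, 0]]`. -/
noncomputable def tMat (z : ℂ) (a : ℝ) : Matrix (Fin 2) (Fin 2) ℂ := !![z - a, -1; 1, 0]

/-- The transfer matrix over the word `ω_0 ω_1 ⋯ ω_{n−1}`:
`M_z(ω_0⋯ω_{n−1}) = M_z(ω_{n−1})⋯M_z(ω_1)·M_z(ω_0)`. -/
noncomputable def tWord (z : ℂ) (ω : ℤ → ℝ) (n : ℕ) : Matrix (Fin 2) (Fin 2) ℂ :=
  ((List.range n).map fun k => tMat z (ω ((n - 1 - k : ℕ) : ℤ))).prod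

open Matrix

lemma Matrix.mul_self_add_det_smul_one {R : Type*} [CommRing R] (A : Matrix (Fin 2) (Fin 2) R) :
    A * A + A.det • 1 = A.trace • A := by
  ext i j
  fin_cases i <;> fin_cases j <;>
    simp [mul_apply, Fin.sum_univ_two, det_fin_two, trace_fin_two] <;> ring

lemma det_tMat (z : ℂ) (a : ℝ) : (tMat z a).det = 1 := by
  simp [tMat, det_fin_two_of]

lemma det_tWord (z : ℂ) (ω : ℤ → ℝ) (n : ℕ) : (tWord z ω n).det = 1 := by
  rw [tWord, ← coe_detMonoidHom, MonoidHom.map_list_prod]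
  exact List.prod_eq_one (by simp [det_tMat])

lemma tWord_succ (z : ℂ) (ω : ℤ → ℝ) (n : ℕ) :
    tWord z ω (n + 1) = tWord z (fun j => ω (j + 1)) n * tMat z (ω 0) := by
  rw [tWord, tWord, List.range_succ, List.map_append, List.prod_append]
  simp only [List.map_cons, List.map_nil, List.prod_cons, List.prod_nil, mul_one,
    Nat.add_sub_cancel, Nat.sub_self, Nat.cast_zero]
  congr 2
  refine List.map_congr_left fun k hk => ?_
  rw [List.mem_range] at hk
  congr 2
  omega

lemma tWord_congr (z : ℂ) {ω ω' : ℤ → ℝ} {n : ℕ} (h : ∀ j : ℕ, j < n → ω j = ω' j) :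
    tWord z ω n = tWord z ω' n := by
  rw [tWord, tWord]
  refine congrArg List.prod (List.map_congr_left fun k hk => ?_)
  rw [List.mem_range] at hk
  rw [h _ (by omega)]

def SolvesSchrodinger (ω : ℤ → ℝ) (z : ℂ) (ψ : ℤ → ℂ) : Prop :=
  ∀ n : ℤ, ψ (n + 1) + ψ (n - 1) + (ω n : ℂ) * ψ n = z * ψ n

def stateVec (ψ : ℤ → ℂ) (n : ℤ) : Fin 2 → ℂ := ![ψ n, ψ (n - 1)]

lemma norm_stateVec_sq_le (ψ : ℤ → ℂ) (n : ℤ) :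
    ‖stateVec ψ n‖ ^ 2 ≤ ‖ψ n‖ ^ 2 + ‖ψ (n - 1)‖ ^ 2 := by
  have hS : 0 ≤ ‖ψ n‖ ^ 2 + ‖ψ (n - 1)‖ ^ 2 := by positivity
  rw [← Real.le_sqrt (norm_nonneg _) hS]
  refine pi_norm_le_iff_of_nonneg (Real.sqrt_nonneg _) |>.2 fun i => ?_
  rw [Real.le_sqrt (norm_nonneg _) hS]
  fin_cases i <;> simp [stateVec]

lemma summable_norm_stateVec_sq {ψ : ℤ → ℂ} (hψ : Summable fun n => ‖ψ n‖ ^ 2) :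
    Summable fun n => ‖stateVec ψ n‖ ^ 2 :=
  .of_nonneg_of_le (fun _ => by positivity) (norm_stateVec_sq_le ψ)
    (hψ.add (hψ.comp_injective (sub_left_injective (b := 1))))

namespace SolvesSchrodinger

variable {ω : ℤ → ℝ} {z : ℂ} {ψ : ℤ → ℂ}

lemma tMat_mulVec_stateVec (h : SolvesSchrodinger ω z ψ) (n : ℤ) :
    tMat z (ω n) *ᵥ stateVec ψ n = stateVec ψ (n + 1) := by
  have hrec : ψ (n + 1) = (z - ω n) * ψ n - ψ (n - 1) := by linear_combination h n
  ext i
  fin_cases i <;>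
    simp [tMat, stateVec, mulVec, dotProduct, Fin.sum_univ_two, hrec, sub_eq_add_neg]

lemma tWord_mulVec_stateVec (h : SolvesSchrodinger ω z ψ) (s : ℤ) (n : ℕ) :
    tWord z (fun j => ω (j + s)) n *ᵥ stateVec ψ s = stateVec ψ (s + n) := by
  induction n generalizing s with
  | zero => simp [tWord]
  | succ n ih =>
    have hshift : (fun j : ℤ => ω (j + 1 + s)) = fun j => ω (j + (s + 1)) := by
      funext j; ring_nf
    rw [tWord_succ, ← mulVec_mulVec, zero_add, h.tMat_mulVec_stateVec, hshift, ih]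
    push_cast; ring_nf

lemma stateVec_eq_zero_iff_succ (h : SolvesSchrodinger ω z ψ) (n : ℤ) :
    stateVec ψ (n + 1) = 0 ↔ stateVec ψ n = 0 := by
  have hunit : IsUnit (tMat z (ω n)) := by
    rw [isUnit_iff_isUnit_det, det_tMat]; exact isUnit_one
  rw [← h.tMat_mulVec_stateVec, ← mulVec_zero (tMat z (ω n)),
    (mulVec_injective_iff_isUnit.2 hunit).eq_iff, mulVec_zero]

lemma stateVec_zero_ne_zero (h : SolvesSchrodinger ω z ψ) (hψ : ψ ≠ 0) :
    stateVec ψ 0 ≠ 0 := by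
  refine fun h0 => hψ (funext fun n => ?_)
  have hn : stateVec ψ n = 0 := by
    induction n using Int.induction_on with
    | zero => exact h0
    | succ i ih => exact (h.stateVec_eq_zero_iff_succ _).2 ih
    | pred i ih => exact (h.stateVec_eq_zero_iff_succ _).1 (by simpa using ih)
  simpa [stateVec] using congrFun hn 0

lemma trace_smul_stateVec_zero (h : SolvesSchrodinger ω z ψ) {N : ℕ}
    (hrep : ∀ j : ℕ, j < N → ω ((j : ℤ) - (N : ℤ)) = ω (j : ℤ)) :
    (tWord z ω N).trace • stateVec ψ 0 = stateVec ψ N + stateVec ψ (-N) := by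
  set A := tWord z ω N
  have hforward : A *ᵥ stateVec ψ 0 = stateVec ψ N := by
    simpa using h.tWord_mulVec_stateVec 0 N
  have hbackward : A *ᵥ stateVec ψ (-N) = stateVec ψ 0 := by
    have hA : tWord z (fun j => ω (j + -N)) N = A :=
      tWord_congr z fun j hj => by rw [← sub_eq_add_neg, hrep j hj]
    simpa [hA] using h.tWord_mulVec_stateVec (-N) N
  have hCH := congrArg (· *ᵥ stateVec ψ (-N)) (A.mul_self_add_det_smul_one)
  simp only [det_tWord, one_smul, add_mulVec, one_mulVec, smul_mulVec, ← mulVec_mulVec,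
    hbackward, hforward, A] at hCH
  exact hCH.symm

lemma norm_trace_sq_mul_le (h : SolvesSchrodinger ω z ψ) {N : ℕ}
    (hrep : ∀ j : ℕ, j < N → ω ((j : ℤ) - (N : ℤ)) = ω (j : ℤ)) :
    ‖(tWord z ω N).trace‖ ^ 2 * ‖stateVec ψ 0‖ ^ 2 ≤
      2 * (‖stateVec ψ N‖ ^ 2 + ‖stateVec ψ (-N)‖ ^ 2) := by
  have hle : ‖(tWord z ω N).trace‖ * ‖stateVec ψ 0‖ ≤ ‖stateVec ψ N‖ + ‖stateVec ψ (-N)‖ := by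
    rw [← norm_smul, h.trace_smul_stateVec_zero hrep]
    exact norm_add_le _ _
  rw [← mul_pow]
  exact (pow_le_pow_left₀ (by positivity) hle 2).trans add_sq_le

end SolvesSchrodinger

/-- Centered Gordon criterion. Suppose `ω : ℤ → ℝ` satisfies
`ω|_{[−n_m,−1]} = ω|_{[0,n_m−1]}` along a strictly increasing sequence `(n_m)`, and set
`x_m(E) = tr M_E(ω_0⋯ω_{n_m−1})`. If `Σ_m |x_m(E)|² = ∞`, then `E` is not an
eigenvalue: there is no nonzero square-summable solution of the difference equation. -/
theorem centered_gordon_no_eigenvalue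
    (ω : ℤ → ℝ) (nseq : ℕ → ℕ) (hmono : StrictMono nseq)
    (hrep : ∀ m : ℕ, ∀ j : ℕ, j < nseq m → ω ((j : ℤ) - (nseq m : ℤ)) = ω (j : ℤ))
    (E : ℝ)
    (hdiv : ¬ Summable fun m : ℕ => (‖(tWord (E : ℂ) ω (nseq m)).trace‖) ^ 2) :
    ¬ ∃ ψ : ℤ → ℂ, ψ ≠ 0 ∧ Summable (fun n : ℤ => ‖ψ n‖ ^ 2) ∧
      ∀ n : ℤ, ψ (n + 1) + ψ (n - 1) + (ω n : ℂ) * ψ n = (E : ℂ) * ψ n := by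
  rintro ⟨ψ, hψ, hsum, hsol⟩
  have h : SolvesSchrodinger ω E ψ := hsol
  have hΦ0 : 0 < ‖stateVec ψ 0‖ ^ 2 := by
    have := norm_pos_iff.2 (h.stateVec_zero_ne_zero hψ)
    positivity
  have hΦ := summable_norm_stateVec_sq hsum
  have hinj : Function.Injective fun m => (nseq m : ℤ) :=
    Nat.cast_injective.comp hmono.injective
  have hmajorant : Summable fun m =>
      2 * (‖stateVec ψ (nseq m)‖ ^ 2 + ‖stateVec ψ (-(nseq m : ℤ))‖ ^ 2) :=
    ((hΦ.comp_injective hinj).add (hΦ.comp_injective (neg_injective.comp hinj))).mul_left 2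
  refine hdiv ((summable_mul_right_iff hΦ0.ne').1 ?_)
  exact .of_nonneg_of_le (fun _ => by positivity) (fun m => h.norm_trace_sq_mul_le (hrep m))
    hmajorant
end

section
/- Let u = u_1⋯u_k and v = v_1⋯v_ℓ be finite words of real numbers. If M_z(u) = M_z(v) for all z ∈ ℂ, then u = v; that is, k = ℓ and u_j = v_j for all 1 ≤ j ≤ k. -/
/-- The transfer matrix over a finite word `w = a_1⋯a_n` (given as a list):
`M_z(w) = M_z(a_n)·M_z(a_{n−1})⋯M_z(a_1)`. -/
noncomputable def tWordList (z : ℂ) (w : List ℝ) : Matrix (Fin 2) (Fin 2) ℂ :=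
  (w.reverse.map (tMat z)).prod

open Polynomial

section TransferPolynomial

variable {R : Type*} [CommRing R]

noncomputable def tMatPoly (a : R) : Matrix (Fin 2) (Fin 2) R[X] := !![X - C a, -1; 1, 0]

noncomputable def tWordPoly (w : List R) : Matrix (Fin 2) (Fin 2) R[X] :=
  (w.reverse.map tMatPoly).prod

lemma tWordPoly_nil : tWordPoly ([] : List R) = 1 := rfl

lemma tWordPoly_append_singleton (w : List R) (a : R) :
    tWordPoly (w ++ [a]) = tMatPoly a * tWordPoly w := by
  simp [tWordPoly]

lemma eq_mul_of_tMatPoly_mul_eq {a b : R} {A B : Matrix (Fin 2) (Fin 2) R[X]}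
    (h : tMatPoly a * A = tMatPoly b * B) : A = !![1, 0; C (b - a), 1] * B := by
  have inv_mul (c : R) : !![0, 1; -1, X - C a] * tMatPoly c = !![1, 0; C (c - a), 1] := by
    ext1 i j
    fin_cases i <;> fin_cases j <;> simp [tMatPoly, Matrix.mul_apply, C_sub]
  calc A
    _ = !![0, 1; -1, X - C a] * tMatPoly a * A := by
      rw [inv_mul, sub_self, map_zero, ← Matrix.one_fin_two, one_mul]
    _ = !![1, 0; C (b - a), 1] * B := by rw [mul_assoc, h, ← mul_assoc, inv_mul]

lemma tMatPoly_mul_cancel {a b : R} {A B : Matrix (Fin 2) (Fin 2) R[X]} {n : ℕ}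
    (hB : (B 0 0).Monic) (hB00 : (B 0 0).degree = n) (hA10 : (A 1 0).degree < n)
    (hB10 : (B 1 0).degree < n) (h : tMatPoly a * A = tMatPoly b * B) : a = b ∧ A = B := by
  have hA := eq_mul_of_tMatPoly_mul_eq h
  have hab : b - a = 0 := by
    by_contra hne
    have h10 : C (b - a) * B 0 0 = A 1 0 - B 1 0 := by
      rw [hA]
      simp [Matrix.mul_apply]
    have hlt : (C (b - a) * B 0 0).degree < n :=
      h10 ▸ (degree_sub_le _ _).trans_lt (max_lt hA10 hB10)
    rw [hB.degree_mul, degree_C hne, hB00, zero_add] at hlt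
    exact lt_irrefl _ hlt
  refine ⟨(sub_eq_zero.mp hab).symm, ?_⟩
  rw [hA, hab, map_zero, ← Matrix.one_fin_two, one_mul]

variable [Nontrivial R]

lemma tWordPoly_col_zero_degree (w : List R) :
    (tWordPoly w 0 0).Monic ∧ (tWordPoly w 0 0).degree = w.length ∧
      (tWordPoly w 1 0).degree < w.length := by
  induction w using List.reverseRecOn with
  | nil => simp [tWordPoly_nil]
  | append_singleton w a ih =>
    obtain ⟨hmonic, hdeg, hlt⟩ := ih
    have h00 : tWordPoly (w ++ [a]) 0 0 = (X - C a) * tWordPoly w 0 0 - tWordPoly w 1 0 := by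
      simp [tWordPoly_append_singleton, tMatPoly, Matrix.mul_apply, sub_eq_add_neg]
    have h10 : tWordPoly (w ++ [a]) 1 0 = tWordPoly w 0 0 := by
      simp [tWordPoly_append_singleton, tMatPoly, Matrix.mul_apply]
    have hlead : ((X - C a) * tWordPoly w 0 0).degree = ((w ++ [a]).length : WithBot ℕ) := by
      rw [hmonic.degree_mul, degree_X_sub_C, hdeg, List.length_append, List.length_singleton,
        Nat.cast_add, Nat.cast_one, add_comm]
    have hgrow : (w.length : WithBot ℕ) < (w ++ [a]).length := WithBot.coe_lt_coe.mpr (by simp)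
    have hsmall : (tWordPoly w 1 0).degree < ((X - C a) * tWordPoly w 0 0).degree :=
      hlt.trans (hgrow.trans_eq hlead.symm)
    rw [h00, h10, degree_sub_eq_left_of_degree_lt hsmall, hlead, hdeg]
    exact ⟨((monic_X_sub_C a).mul hmonic).sub_of_left hsmall, rfl, hgrow⟩

lemma length_eq_of_tWordPoly_eq {u v : List R} (h : tWordPoly u = tWordPoly v) :
    u.length = v.length := by
  have hu := (tWordPoly_col_zero_degree u).2.1
  rw [h, (tWordPoly_col_zero_degree v).2.1] at hu
  exact_mod_cast hu.symm

lemma tWordPoly_injective : Function.Injective (tWordPoly (R := R)) := by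
  intro u v h
  induction u using List.reverseRecOn generalizing v with
  | nil => exact (List.length_eq_zero_iff.mp (length_eq_of_tWordPoly_eq h).symm).symm
  | append_singleton u a ih =>
    have hlen := length_eq_of_tWordPoly_eq h
    rcases v.eq_nil_or_concat with rfl | ⟨v, b, rfl⟩
    · simp at hlen
    rw [List.concat_eq_append] at hlen h ⊢
    simp only [List.length_append, List.length_singleton, Nat.add_right_cancel_iff] at hlen
    rw [tWordPoly_append_singleton, tWordPoly_append_singleton] at h
    obtain ⟨-, -, hu10⟩ := tWordPoly_col_zero_degree u
    obtain ⟨hv00, hvdeg, hv10⟩ := tWordPoly_col_zero_degree v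
    obtain ⟨rfl, huv⟩ := tMatPoly_mul_cancel hv00 hvdeg (hlen ▸ hu10) hv10 h
    rw [ih huv]

end TransferPolynomial

lemma tWordPoly_map_eval (z : ℂ) (w : List ℝ) :
    (tWordPoly (w.map ((↑) : ℝ → ℂ))).map (eval z) = tWordList z w := by
  change (evalRingHom z).mapMatrix _ = _
  simp only [tWordPoly, tWordList, map_list_prod, List.map_reverse, List.map_map]
  congr 3
  ext1 a
  ext i j
  fin_cases i <;> fin_cases j <;> simp [tMatPoly, tMat]

/-- If two finite words of real numbers have identical transfer
matrices for every spectral parameter `z ∈ ℂ`, then the words coincide. -/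
theorem transfer_matrices_determine_word
    (u v : List ℝ) (h : ∀ z : ℂ, tWordList z u = tWordList z v) : u = v := by
  have hpoly : tWordPoly (u.map ((↑) : ℝ → ℂ)) = tWordPoly (v.map ((↑) : ℝ → ℂ)) := by
    ext1 i j
    refine Polynomial.funext fun z => ?_
    simpa only [← tWordPoly_map_eval, Matrix.map_apply] using congrFun₂ (h z) i j
  exact List.map_injective_iff.mpr Complex.ofReal_injective (tWordPoly_injective hpoly)
end
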